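/- arXiv:2404.19039 — 8 statements merged into one kernel-verified Lean document; each statement's English description precedes it below -/
import Mathlib

section
/- Let T be a linear transformation of a finite-dimensional real vector space W, and assume W splits as a direct sum of eigenspaces for T with all eigenvalues different from ±1. Let W⁺, W⁻ ⊆ W be subspaces whose dimensions sum to dim W, such that W⁺ has zero intersection with the contracting subspace of T and W⁻ has zero intersection with the expanding subspace of T. Then there exists K ≥ 0 such that whenever k⁺, k⁻ are nonnegative integers with k⁺ + k⁻ ≥ K, one has the direct sum decomposition W = T^{k⁺} W⁺ ⊕ T^{-k⁻} W⁻. -/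
/-!
In an eigenbasis of `T`, let `p` and `q` be the coordinates along the contracting and the
expanding eigenvectors, with sup norms, so that `‖p (T x)‖ ≤ r ‖p x‖` and `‖q x‖ ≤ r' ‖q (T x)‖`
for some `r, r' < 1`. Transversality makes `q` injective on `W⁺` and `p` injective on `W⁻`, hence
`‖p‖ ≤ C ‖q‖` on `W⁺` and `‖q‖ ≤ C' ‖p‖` on `W⁻`. If `x ∈ W⁺` and `Tⁿ x ∈ W⁻`, chaining these
bounds gives `‖q x‖ ≤ C C' (r r')ⁿ ‖q x‖`, which forces `x = 0` once `n` is large. For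
`n = k⁺ + k⁻` this is the disjointness of `T^{k⁺} W⁺` and `T^{-k⁻} W⁻`, and the dimensions add up.
-/

open Filter Module

universe u

lemma iterate_le_pow_mul {α : Type*} {f : α → α} {g : α → ℝ} {r : ℝ} (hr : 0 ≤ r)
    (h : ∀ x, g (f x) ≤ r * g x) (n : ℕ) (x : α) : g (f^[n] x) ≤ r ^ n * g x := by
  induction n with
  | zero => simp
  | succ n ih =>
    rw [Function.iterate_succ_apply', pow_succ', mul_assoc]
    exact (h _).trans (mul_le_mul_of_nonneg_left ih hr)

lemma le_pow_mul_iterate {α : Type*} {f : α → α} {g : α → ℝ} {r : ℝ} (hr : 0 ≤ r)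
    (h : ∀ x, g x ≤ r * g (f x)) (n : ℕ) (x : α) : g x ≤ r ^ n * g (f^[n] x) := by
  induction n with
  | zero => simp
  | succ n ih =>
    rw [Function.iterate_succ_apply', pow_succ, mul_assoc]
    exact ih.trans (mul_le_mul_of_nonneg_left (h _) (pow_nonneg hr n))

lemma exists_norm_le_mul_norm_of_disjoint_ker {𝕜 W A B : Type*} [NontriviallyNormedField 𝕜]
    [CompleteSpace 𝕜] [AddCommGroup W] [Module 𝕜 W] [SeminormedAddCommGroup A] [NormedSpace 𝕜 A]
    [NormedAddCommGroup B] [NormedSpace 𝕜 B] [FiniteDimensional 𝕜 B] (p : W →ₗ[𝕜] A) {q : W →ₗ[𝕜] B}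
    {P : Submodule 𝕜 W} (hP : Disjoint P (LinearMap.ker q)) :
    ∃ C, 0 ≤ C ∧ ∀ x ∈ P, ‖p x‖ ≤ C * ‖q x‖ := by
  have hker : LinearMap.ker (q ∘ₗ P.subtype) = ⊥ := by
    rwa [LinearMap.ker_comp, ← Submodule.disjoint_iff_comap_eq_bot]
  obtain ⟨g, hg⟩ := (q ∘ₗ P.subtype).exists_leftInverse_of_injective hker
  let L := LinearMap.toContinuousLinearMap (p ∘ₗ P.subtype ∘ₗ g)
  refine ⟨‖L‖, norm_nonneg _, fun x hx => ?_⟩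
  have hL : L (q x) = p x :=
    congrArg (fun y : P => p y) (LinearMap.congr_fun hg ⟨x, hx⟩)
  exact hL ▸ L.le_opNorm (q x)

theorem eventually_forall_eq_zero_of_pow_apply_mem
    {𝕜 W A B : Type*} [NontriviallyNormedField 𝕜] [CompleteSpace 𝕜] [AddCommGroup W] [Module 𝕜 W]
    [NormedAddCommGroup A] [NormedSpace 𝕜 A] [FiniteDimensional 𝕜 A]
    [NormedAddCommGroup B] [NormedSpace 𝕜 B] [FiniteDimensional 𝕜 B]
    (f : Module.End 𝕜 W) (p : W →ₗ[𝕜] A) (q : W →ₗ[𝕜] B) {r r' : ℝ}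
    (hr : 0 ≤ r) (hr' : 0 ≤ r') (hr1 : r < 1) (hr'1 : r' < 1)
    (hp : ∀ x, ‖p (f x)‖ ≤ r * ‖p x‖) (hq : ∀ x, ‖q x‖ ≤ r' * ‖q (f x)‖)
    {P M : Submodule 𝕜 W} (hP : Disjoint P (LinearMap.ker q)) (hM : Disjoint M (LinearMap.ker p)) :
    ∀ᶠ n in atTop, ∀ x ∈ P, (f ^ n) x ∈ M → x = 0 := by
  obtain ⟨C, hC0, hC⟩ := exists_norm_le_mul_norm_of_disjoint_ker p hP
  obtain ⟨C', hC'0, hC'⟩ := exists_norm_le_mul_norm_of_disjoint_ker q hM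
  have hsmall : ∀ᶠ n in atTop, C' * C * (r' * r) ^ n < 1 := by
    have := (tendsto_pow_atTop_nhds_zero_of_lt_one (mul_nonneg hr' hr)
      (mul_lt_one_of_nonneg_of_lt_one_left hr' hr'1 hr1.le)).const_mul (C' * C)
    rw [mul_zero] at this
    exact this.eventually (gt_mem_nhds one_pos)
  filter_upwards [hsmall] with n hn x hx hfx
  have hqx : ‖q x‖ ≤ C' * C * (r' * r) ^ n * ‖q x‖ := calc
    ‖q x‖ ≤ r' ^ n * ‖q ((f ^ n) x)‖ := by
      rw [Module.End.pow_apply]; exact le_pow_mul_iterate (g := fun y => ‖q y‖) hr' hq n x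
    _ ≤ r' ^ n * (C' * ‖p ((f ^ n) x)‖) := by gcongr; exact hC' _ hfx
    _ ≤ r' ^ n * (C' * (r ^ n * ‖p x‖)) := by
      rw [Module.End.pow_apply]; gcongr; exact iterate_le_pow_mul (g := fun y => ‖p y‖) hr hp n x
    _ ≤ r' ^ n * (C' * (r ^ n * (C * ‖q x‖))) := by gcongr; exact hC x hx
    _ = C' * C * (r' * r) ^ n * ‖q x‖ := by ring
  have hqx0 : q x = 0 := norm_le_zero_iff.1 (by nlinarith [norm_nonneg (q x)])
  exact Submodule.disjoint_def.1 hP x hx hqx0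

theorem Module.End.exists_basis_apply_eq_smul_of_iSup_eigenspace_eq_top {K : Type u} {V : Type*}
    [Field K] [AddCommGroup V] [Module K V] [FiniteDimensional K V] (f : Module.End K V)
    {S : Set K} (h : ⨆ μ ∈ S, f.eigenspace μ = ⊤) :
    ∃ (ι : Type u) (_ : Fintype ι) (b : Basis ι K V) (μ : ι → K),
      (∀ i, μ i ∈ S) ∧ ∀ i, f (b i) = μ i • b i := by
  classical
  have hint : DirectSum.IsInternal fun μ : S => f.eigenspace μ :=
    DirectSum.isInternal_submodule_of_iSupIndep_of_iSup_eq_top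
      (f.eigenspaces_iSupIndep.comp Subtype.val_injective) ((iSup_subtype'' S _).trans h)
  let b := hint.collectedBasis fun μ => Module.finBasis K (f.eigenspace μ)
  exact ⟨_, FiniteDimensional.fintypeBasisIndex b, b, fun i => i.1, fun i => i.1.2,
    fun i => Module.End.mem_eigenspace_iff.mp (hint.collectedBasis_mem _ i)⟩

namespace Module.Basis

variable {W ι : Type*} [AddCommGroup W]

section Field

variable {K : Type*} [Field K] [Module K W] {b : Basis ι K W} {f : Module.End K W} {μ : ι → K}

lemma repr_apply_eq_mul_of_apply_eq_smul (hb : ∀ i, f (b i) = μ i • b i) (y : W) (i : ι) :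
    b.repr (f y) i = μ i * b.repr y i := by
  have : b.coord i ∘ₗ f = μ i • b.coord i := b.ext fun j => by
    rcases eq_or_ne j i with rfl | hij
    · simp [hb]
    · simp [hb, hij]
  exact LinearMap.congr_fun this y

lemma mem_iSup_eigenspace_of_repr_eq_zero (hb : ∀ i, f (b i) = μ i • b i) {S : Set K} {y : W}
    (hy : ∀ i, μ i ∉ S → b.repr y i = 0) : y ∈ ⨆ ν ∈ S, f.eigenspace ν := by
  rw [← b.linearCombination_repr y, Finsupp.linearCombination_apply]
  refine Submodule.finsuppSum_mem _ _ _ _ fun i _ => ?_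
  by_cases hi : μ i ∈ S
  · exact Submodule.smul_mem _ _ <| Submodule.mem_iSup_of_mem (μ i) <|
      Submodule.mem_iSup_of_mem hi <| Module.End.mem_eigenspace_iff.mpr (hb i)
  · simp [hy i hi]

end Field

variable {𝕜 : Type*} [NormedField 𝕜] [Module 𝕜 W] {κ : Type*} [Fintype κ]

lemma norm_pi_coord_apply_le {b : Basis ι 𝕜 W} {f : Module.End 𝕜 W} {μ : ι → 𝕜}
    (hb : ∀ i, f (b i) = μ i • b i) (e : κ → ι) (y : W) :
    ‖(LinearMap.pi fun k => b.coord (e k)) (f y)‖ ≤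
      ‖fun k => μ (e k)‖ * ‖(LinearMap.pi fun k => b.coord (e k)) y‖ := by
  have : (LinearMap.pi fun k => b.coord (e k)) (f y) =
      (fun k => μ (e k)) * (LinearMap.pi fun k => b.coord (e k)) y := by
    ext k
    simp [repr_apply_eq_mul_of_apply_eq_smul hb]
  exact this ▸ norm_mul_le _ _

lemma norm_pi_coord_le {b : Basis ι 𝕜 W} {f : Module.End 𝕜 W} {μ : ι → 𝕜}
    (hb : ∀ i, f (b i) = μ i • b i) (e : κ → ι) (he : ∀ k, μ (e k) ≠ 0) (y : W) :
    ‖(LinearMap.pi fun k => b.coord (e k)) y‖ ≤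
      ‖fun k => (μ (e k))⁻¹‖ * ‖(LinearMap.pi fun k => b.coord (e k)) (f y)‖ := by
  have : (LinearMap.pi fun k => b.coord (e k)) y =
      (fun k => (μ (e k))⁻¹) * (LinearMap.pi fun k => b.coord (e k)) (f y) := by
    ext k
    simp [repr_apply_eq_mul_of_apply_eq_smul hb, he]
  exact this ▸ norm_mul_le _ _

end Module.Basis

lemma isCompl_map_pow_map_symm_pow {K W : Type*} [Field K] [AddCommGroup W] [Module K W]
    [FiniteDimensional K W] (T : W ≃ₗ[K] W) {U V : Submodule K W}
    (hdim : finrank K U + finrank K V = finrank K W) {m n : ℕ}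
    (h : ∀ x ∈ U, ((T : W →ₗ[K] W) ^ (m + n)) x ∈ V → x = 0) :
    IsCompl (U.map ((T : W →ₗ[K] W) ^ m)) (V.map ((T.symm : W →ₗ[K] W) ^ n)) := by
  have hinj : ∀ (e : W ≃ₗ[K] W) (k : ℕ), Function.Injective ((e : W →ₗ[K] W) ^ k) := fun e k => by
    rw [Module.End.coe_pow]; exact e.injective.iterate k
  refine (Submodule.isCompl_iff_disjoint _ _ ?_).2 ?_
  · rw [← (Submodule.equivMapOfInjective _ (hinj T m) U).finrank_eq,
      ← (Submodule.equivMapOfInjective _ (hinj T.symm n) V).finrank_eq, hdim]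
  · rw [Submodule.disjoint_def]
    rintro _ ⟨x, hx, rfl⟩ ⟨y, hy, hxy⟩
    have hTy : ((T : W →ₗ[K] W) ^ (m + n)) x = y := by
      rw [add_comm, pow_add, Module.End.mul_apply, ← hxy, Module.End.pow_apply,
        Module.End.pow_apply]
      exact (Function.LeftInverse.iterate T.apply_symm_apply n) y
    simp [h x hx (hTy ▸ hy)]

/-- If `W` splits as a direct sum of eigenspaces of `T` with eigenvalues of absolute value `≠ 1`,
and `W⁺`, `W⁻` are subspaces with complementary dimensions meeting the contracting
(resp. expanding) subspace only in `0`, then `W = T^{k⁺} W⁺ ⊕ T^{-k⁻} W⁻` whenever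
`k⁺ + k⁻` is sufficiently large. -/
theorem unif_transverse
    (W : Type*) [AddCommGroup W] [Module ℝ W] [FiniteDimensional ℝ W]
    (T : W ≃ₗ[ℝ] W)
    (hdiag : (⨆ μ ∈ {μ : ℝ | |μ| ≠ 1},
        Module.End.eigenspace (T : W →ₗ[ℝ] W) μ) = ⊤)
    (Wp Wm : Submodule ℝ W)
    (hdim : Module.finrank ℝ Wp + Module.finrank ℝ Wm = Module.finrank ℝ W)
    (hWp : Wp ⊓ (⨆ μ ∈ {μ : ℝ | |μ| < 1},
        Module.End.eigenspace (T : W →ₗ[ℝ] W) μ) = ⊥)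
    (hWm : Wm ⊓ (⨆ μ ∈ {μ : ℝ | 1 < |μ|},
        Module.End.eigenspace (T : W →ₗ[ℝ] W) μ) = ⊥) :
    ∃ K : ℕ, ∀ kp km : ℕ, K ≤ kp + km →
      IsCompl (Submodule.map ((T : W →ₗ[ℝ] W) ^ kp) Wp)
              (Submodule.map ((T.symm : W →ₗ[ℝ] W) ^ km) Wm) := by
  obtain ⟨ι, _, b, μ, hμ, hb⟩ :=
    Module.End.exists_basis_apply_eq_smul_of_iSup_eigenspace_eq_top (T : W →ₗ[ℝ] W) hdiag
  let p : W →ₗ[ℝ] ({i // |μ i| < 1} → ℝ) := LinearMap.pi fun k => b.coord k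
  let q : W →ₗ[ℝ] ({i // 1 < |μ i|} → ℝ) := LinearMap.pi fun k => b.coord k
  have hP : Disjoint Wp (LinearMap.ker q) := (disjoint_iff.2 hWp).mono_right fun y hy =>
    b.mem_iSup_eigenspace_of_repr_eq_zero hb fun i (hi : ¬|μ i| < 1) =>
      congr_fun (LinearMap.mem_ker.1 hy) ⟨i, (not_lt.1 hi).lt_of_ne' (hμ i)⟩
  have hM : Disjoint Wm (LinearMap.ker p) := (disjoint_iff.2 hWm).mono_right fun y hy =>
    b.mem_iSup_eigenspace_of_repr_eq_zero hb fun i (hi : ¬1 < |μ i|) =>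
      congr_fun (LinearMap.mem_ker.1 hy) ⟨i, (not_lt.1 hi).lt_of_ne (hμ i)⟩
  have hr : ‖fun k : {i // |μ i| < 1} => μ k‖ < 1 := (pi_norm_lt_iff one_pos).2 fun k => k.2
  have hr' : ‖fun k : {i // 1 < |μ i|} => (μ k)⁻¹‖ < 1 :=
    (pi_norm_lt_iff one_pos).2 fun k => by rw [norm_inv]; exact inv_lt_one_of_one_lt₀ k.2
  obtain ⟨K, hK⟩ := eventually_atTop.1 <| eventually_forall_eq_zero_of_pow_apply_mem _ p q
    (norm_nonneg _) (norm_nonneg _) hr hr' (b.norm_pi_coord_apply_le hb _)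
    (b.norm_pi_coord_le hb _ fun k => abs_pos.1 (one_pos.trans k.2)) hP hM
  exact ⟨K, fun kp km hk => isCompl_map_pow_map_symm_pow T hdim (hK _ hk)⟩
end

section
/- Let T be a linear transformation of a finite-dimensional real vector space W, diagonalizable with all eigenvalues of absolute value ≠ 1, and let W⁺ ⊆ W be a subspace with zero intersection with the contracting subspace of T. Then there exist constants C > 0 and 0 < c < 1, depending only on T, W⁺ and a fixed norm ‖·‖ on W, such that for all w ∈ W⁺ and all integers 0 ≤ j ≤ k, ‖T^j w‖ ≤ C · c^{k-j} · ‖T^k w‖. -/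
/-!
In an eigenbasis `T` is diagonal, and up to constants `‖·‖` is the sup norm of the coordinates.
Choose `c < 1` with `c * |μ| ≥ 1` for every expanding eigenvalue `μ`; then each expanding
coordinate of `T^j w` is at most `c^(k-j)` times that of `T^k w`. The contracting coordinates of
`T^j w` are at most `‖w‖`, and because `W⁺` meets the contracting subspace trivially, the
expanding coordinates are injective on `W⁺`, so `‖w‖` is bounded by a multiple of the expanding
coordinates of `w`, which are at most `c^k ≤ c^(k-j)` times those of `T^k w`.
-/

open Module Filter Topology

universe u v

theorem pow_le_pow_sub_mul_pow {a c : ℝ} (ha : 0 ≤ a) (hca : 1 ≤ c * a) {n m : ℕ}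
    (hnm : n ≤ m) : a ^ n ≤ c ^ (m - n) * a ^ m := by
  calc a ^ n ≤ (c * a) ^ (m - n) * a ^ n :=
        le_mul_of_one_le_left (by positivity) (one_le_pow₀ hca)
    _ = c ^ (m - n) * a ^ m := by rw [mul_pow, mul_assoc, ← pow_add, Nat.sub_add_cancel hnm]

theorem exists_lt_one_forall_one_le_mul {ι : Type*} [Finite ι] (a : ι → ℝ) :
    ∃ c : ℝ, 0 < c ∧ c < 1 ∧ ∀ i, 1 < a i → 1 ≤ c * a i := by
  have h : ∀ᶠ c in 𝓝[<] (1 : ℝ), c ∈ Set.Ioo 0 1 ∧ ∀ i, 1 < a i → 1 ≤ c * a i := by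
    refine Eventually.and (Ioo_mem_nhdsLT zero_lt_one) (eventually_all.2 fun i => ?_)
    rcases le_or_gt (a i) 1 with hi | hi
    · exact .of_forall fun c h => absurd h (not_lt.2 hi)
    · filter_upwards [Ioo_mem_nhdsLT (inv_lt_one_of_one_lt₀ hi)] with c hc _
      exact (inv_le_iff_one_le_mul₀ (by linarith)).1 hc.1.le
  obtain ⟨c, ⟨hc0, hc1⟩, hc⟩ := h.exists
  exact ⟨c, hc0, hc1, hc⟩

theorem Submodule.exists_norm_le_mul_norm_of_disjoint_ker {E F : Type*} [NormedAddCommGroup E]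
    [NormedSpace ℝ E] [FiniteDimensional ℝ E] [NormedAddCommGroup F] [NormedSpace ℝ F]
    {f : E →ₗ[ℝ] F} {V : Submodule ℝ E} (hV : Disjoint V (LinearMap.ker f)) :
    ∃ K : ℝ, 0 < K ∧ ∀ x ∈ V, ‖x‖ ≤ K * ‖f x‖ := by
  obtain ⟨K, hK, hKf⟩ := (f ∘ₗ V.subtype).exists_antilipschitzWith <| LinearMap.ker_eq_bot'.2
    fun x hx => Subtype.ext (Submodule.disjoint_def.1 hV x x.2 hx)
  exact ⟨K, hK, fun x hx => by simpa using hKf.le_mul_dist ⟨x, hx⟩ 0⟩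

section Eigenbasis

variable {K : Type u} {V : Type v} [Field K] [AddCommGroup V] [Module K V]

theorem Module.End.exists_basis_eigenvectors [FiniteDimensional K V] (T : End K V) (S : Set K)
    (hS : ⨆ μ ∈ S, T.eigenspace μ = ⊤) :
    ∃ (ι : Type (max u v)) (_ : Fintype ι) (b : Basis ι K V) (μ : ι → K),
      (∀ i, μ i ∈ S) ∧ ∀ i, T (b i) = μ i • b i := by
  classical
  have hint : DirectSum.IsInternal fun μ : S => T.eigenspace μ :=
    DirectSum.isInternal_submodule_of_iSupIndep_of_iSup_eq_top
      ((End.eigenspaces_iSupIndep T).comp Subtype.val_injective) (by rwa [iSup_subtype])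
  let b := hint.collectedBasis fun μ => Basis.ofVectorSpace K (T.eigenspace μ)
  exact ⟨_, FiniteDimensional.fintypeBasisIndex b, b, fun i => i.1, fun i => i.1.2,
    fun i => End.mem_eigenspace_iff.1 (hint.collectedBasis_mem _ i)⟩

theorem Module.Basis.mulLeft_comp_equivFun {ι : Type*} [Finite ι] {T : End K V}
    {b : Basis ι K V} {μ : ι → K} (hb : ∀ i, T (b i) = μ i • b i) :
    LinearMap.mulLeft K μ ∘ₗ b.equivFun.toLinearMap = b.equivFun.toLinearMap ∘ₗ T := by
  refine b.ext fun j => funext fun i => ?_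
  rcases eq_or_ne i j with rfl | hij
  · simp [hb]
  · simp [hb, Finsupp.single_eq_of_ne hij]

theorem Module.Basis.mem_iSup_eigenspace_of_repr_eq_zero_s3 {ι : Type*} {T : End K V}
    {b : Basis ι K V} {μ : ι → K} (hb : ∀ i, T (b i) = μ i • b i) (S : Set K) {x : V}
    (hx : ∀ i, μ i ∉ S → b.repr x i = 0) : x ∈ ⨆ ν ∈ S, T.eigenspace ν := by
  rw [← b.linearCombination_repr x, Finsupp.linearCombination_apply]
  refine Submodule.finsuppSum_mem _ _ _ _ fun i _ => ?_
  by_cases hi : μ i ∈ S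
  · exact Submodule.smul_mem _ _ <| Submodule.mem_iSup_of_mem (μ i) <|
      Submodule.mem_iSup_of_mem hi (End.mem_eigenspace_iff.2 (hb i))
  · simp [hx i hi]

end Eigenbasis

section

variable {E F : Type*} [NormedAddCommGroup E] [NormedSpace ℝ E] [NormedAddCommGroup F]
  [NormedSpace ℝ F]

def UniformlyExpandingOn (T : End ℝ E) (S : Set E) : Prop :=
  ∃ C c : ℝ, 0 < C ∧ 0 < c ∧ c < 1 ∧
    ∀ w ∈ S, ∀ j k : ℕ, j ≤ k → ‖(T ^ j) w‖ ≤ C * c ^ (k - j) * ‖(T ^ k) w‖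

theorem UniformlyExpandingOn.of_comp_eq_comp [FiniteDimensional ℝ E] {T : End ℝ E}
    {T' : End ℝ F} {e : E →ₗ[ℝ] F} (he : Function.Injective e) (hT : T' ∘ₗ e = e ∘ₗ T)
    {S : Set E} (h : UniformlyExpandingOn T' (e '' S)) : UniformlyExpandingOn T S := by
  obtain ⟨C, c, hC, hc0, hc1, hgrowth⟩ := h
  obtain ⟨K, hK, hKe⟩ := Submodule.exists_norm_le_mul_norm_of_disjoint_ker (f := e) (V := ⊤)
    (by simp [LinearMap.ker_eq_bot_of_injective he])
  obtain ⟨L, hL, hLe⟩ := (LinearMap.toContinuousLinearMap e).bound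
  have hpow (n : ℕ) (w : E) : (T' ^ n) (e w) = e ((T ^ n) w) :=
    LinearMap.congr_fun (End.commute_pow_left_of_commute hT n) w
  refine ⟨K * C * L, c, by positivity, hc0, hc1, fun w hw j k hjk => ?_⟩
  calc ‖(T ^ j) w‖ ≤ K * ‖e ((T ^ j) w)‖ := hKe _ Submodule.mem_top
    _ ≤ K * (C * c ^ (k - j) * ‖e ((T ^ k) w)‖) := by
      rw [← hpow, ← hpow]
      gcongr
      exact hgrowth _ ⟨w, hw, rfl⟩ j k hjk
    _ ≤ K * (C * c ^ (k - j) * (L * ‖(T ^ k) w‖)) := by gcongr; exact hLe _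
    _ = K * C * L * c ^ (k - j) * ‖(T ^ k) w‖ := by ring

end

theorem uniformlyExpandingOn_mulLeft {ι : Type*} [Fintype ι] (μ : ι → ℝ)
    (V : Submodule ℝ (ι → ℝ)) (hV : ∀ x ∈ V, (∀ i, 1 < |μ i| → x i = 0) → x = 0) :
    UniformlyExpandingOn (LinearMap.mulLeft ℝ μ) V := by
  obtain ⟨K, hK, hKV⟩ := Submodule.exists_norm_le_mul_norm_of_disjoint_ker
    (f := LinearMap.funLeft ℝ ℝ ((↑) : {i // 1 < |μ i|} → ι)) <| Submodule.disjoint_def.2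
      fun x hx h0 => hV x hx fun i hi => congr_fun (LinearMap.mem_ker.1 h0) ⟨i, hi⟩
  obtain ⟨c, hc0, hc1, hcμ⟩ := exists_lt_one_forall_one_le_mul fun i => |μ i|
  refine ⟨max 1 K, c, by positivity, hc0, hc1, fun x hx j k hjk => ?_⟩
  simp only [LinearMap.pow_mulLeft, LinearMap.mulLeft_apply]
  set N := ‖μ ^ k * x‖
  have hexp {n : ℕ} (hn : n ≤ k) {i : ι} (hi : 1 < |μ i|) :
      |μ i| ^ n * |x i| ≤ c ^ (k - n) * N :=
    calc |μ i| ^ n * |x i| ≤ c ^ (k - n) * (|μ i| ^ k * |x i|) := by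
          rw [← mul_assoc]; gcongr; exact pow_le_pow_sub_mul_pow (abs_nonneg _) (hcμ i hi) hn
      _ ≤ c ^ (k - n) * N := by
          gcongr
          simpa [abs_mul, abs_pow] using norm_le_pi_norm (μ ^ k * x) i
  have hx : ‖x‖ ≤ K * (c ^ (k - j) * N) := by
    refine (hKV x hx).trans (mul_le_mul_of_nonneg_left ?_ hK.le)
    refine pi_norm_le_iff_of_nonneg (by positivity) |>.2 fun i => ?_
    calc ‖x i‖ = |μ i| ^ 0 * |x i| := by simp
      _ ≤ c ^ (k - 0) * N := hexp (Nat.zero_le k) i.2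
      _ ≤ c ^ (k - j) * N :=
        mul_le_mul_of_nonneg_right (pow_le_pow_of_le_one hc0.le hc1.le (by omega)) (norm_nonneg _)
  refine pi_norm_le_iff_of_nonneg (by positivity) |>.2 fun i => ?_
  rw [Pi.mul_apply, Pi.pow_apply, norm_mul, norm_pow, Real.norm_eq_abs, Real.norm_eq_abs]
  rcases lt_or_ge 1 |μ i| with hi | hi
  · calc |μ i| ^ j * |x i| ≤ c ^ (k - j) * N := hexp hjk hi
      _ ≤ max 1 K * c ^ (k - j) * N := by
          rw [mul_assoc]; exact le_mul_of_one_le_left (by positivity) (le_max_left _ _)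
  · calc |μ i| ^ j * |x i| ≤ ‖x‖ := by
          rw [← Real.norm_eq_abs]
          exact (mul_le_of_le_one_left (norm_nonneg _) (pow_le_one₀ (abs_nonneg _) hi)).trans
            (norm_le_pi_norm x i)
      _ ≤ K * (c ^ (k - j) * N) := hx
      _ ≤ max 1 K * c ^ (k - j) * N := by rw [mul_assoc]; gcongr; exact le_max_right _ _

/-- If `W` splits as a direct sum of eigenspaces of `T` with eigenvalues of absolute value `≠ 1`,
and `W⁺ ⊆ W` meets the contracting subspace only in `0`, then there are constants `C > 0` and
`0 < c < 1` such that `‖T^j w‖ ≤ C · c^{k-j} · ‖T^k w‖` for all `w ∈ W⁺` and `0 ≤ j ≤ k`. -/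
theorem generic_growth
    (W : Type*) [NormedAddCommGroup W] [NormedSpace ℝ W] [FiniteDimensional ℝ W]
    (T : W →ₗ[ℝ] W)
    (hdiag : (⨆ μ ∈ {μ : ℝ | |μ| ≠ 1}, Module.End.eigenspace T μ) = ⊤)
    (Wp : Submodule ℝ W)
    (hWp : Wp ⊓ (⨆ μ ∈ {μ : ℝ | |μ| < 1}, Module.End.eigenspace T μ) = ⊥) :
    ∃ C c : ℝ, 0 < C ∧ 0 < c ∧ c < 1 ∧
      ∀ w ∈ Wp, ∀ j k : ℕ, j ≤ k →
        ‖(T ^ j) w‖ ≤ C * c ^ (k - j) * ‖(T ^ k) w‖ := by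
  obtain ⟨ι, _, b, μ, hμ, hb⟩ := Module.End.exists_basis_eigenvectors T _ hdiag
  refine UniformlyExpandingOn.of_comp_eq_comp b.equivFun.injective
    (b.mulLeft_comp_equivFun hb) ?_
  rw [← Submodule.map_coe]
  refine uniformlyExpandingOn_mulLeft μ _ ?_
  rintro _ ⟨w, hw, rfl⟩ hexp
  have hcontr : w ∈ ⨆ ν ∈ {ν : ℝ | |ν| < 1}, End.eigenspace T ν :=
    b.mem_iSup_eigenspace_of_repr_eq_zero_s3 hb _ fun i hi =>
      hexp i ((not_lt.1 hi).lt_of_ne' (hμ i))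
  have hw0 : w ∈ (⊥ : Submodule ℝ W) := hWp ▸ Submodule.mem_inf.2 ⟨hw, hcontr⟩
  simp [(Submodule.mem_bot ℝ).1 hw0]
end

section
/- Let C > 0 and let a_0, a_1, …, a_N be positive real numbers such that for every m < N, the tail sum Σ_{n=m+1}^{N} a_n ≤ C·a_m. Then a_N ≤ (C / (1 + C^{-1})^{N-1}) · a_0. -/
/-- Elementary tail-sum lemma: if `Σ_{n=m+1}^N a_n ≤ C·a_m` for every `m < N`, then
`a_N ≤ (C / (1 + C⁻¹)^{N-1}) · a_0`. -/
theorem tail_sum_lemma (C : ℝ) (hC : 0 < C) (N : ℕ) (hN : 1 ≤ N)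
    (a : ℕ → ℝ) (hpos : ∀ n ≤ N, 0 < a n)
    (htail : ∀ m < N, ∑ n ∈ Finset.Icc (m + 1) N, a n ≤ C * a m) :
    a N ≤ (C / (1 + C⁻¹) ^ (N - 1)) * a 0 := by
  set S : ℕ → ℝ := fun m => ∑ n ∈ Finset.Icc m N, a n with hS
  have hq : (0:ℝ) < 1 + C⁻¹ := by positivity
  have hSpos : ∀ m ≤ N, 0 < S m := by
    intro m hm
    apply Finset.sum_pos
    · intro i hi
      exact hpos i (Finset.mem_Icc.mp hi).2
    · exact ⟨m, Finset.mem_Icc.mpr ⟨le_refl m, hm⟩⟩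
  have hsplit : ∀ m < N, S m = a m + S (m + 1) := by
    intro m hm
    have : Finset.Icc m N = insert m (Finset.Icc (m + 1) N) := by
      rw [Finset.Icc_add_one_left_eq_Ioc, Finset.Ioc_insert_left (le_of_lt hm)]
    simp only [hS, this]
    rw [Finset.sum_insert (by simp)]
  have hstep : ∀ m < N, S (m + 1) * (1 + C⁻¹) ≤ S m := by
    intro m hm
    have h1 : S (m + 1) ≤ C * a m := htail m hm
    have h2 : C⁻¹ * S (m + 1) ≤ a m := by
      rw [inv_mul_le_iff₀ hC]; exact h1
    have := hsplit m hm
    nlinarith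
  -- S (1 + j) ≤ S 1 / (1 + C⁻¹)^j for 1 + j ≤ N
  have hdecay : ∀ j, 1 + j ≤ N → S (1 + j) ≤ S 1 / (1 + C⁻¹) ^ j := by
    intro j
    induction j with
    | zero => intro _; simp
    | succ k ih =>
      intro hk
      have hk' : 1 + k ≤ N := by omega
      have hk2 : 1 + k < N := by omega
      have h1 := hstep (1 + k) hk2
      have h2 := ih hk'
      have : S (1 + (k + 1)) * (1 + C⁻¹) ≤ S 1 / (1 + C⁻¹) ^ k := by
        calc S (1 + (k + 1)) * (1 + C⁻¹) = S (1 + k + 1) * (1 + C⁻¹) := by ring_nf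
        _ ≤ S (1 + k) := h1
        _ ≤ S 1 / (1 + C⁻¹) ^ k := h2
      rw [le_div_iff₀ (by positivity)] at this ⊢
      calc S (1 + (k + 1)) * (1 + C⁻¹) ^ (k + 1)
          = S (1 + (k + 1)) * (1 + C⁻¹) * (1 + C⁻¹) ^ k := by ring
        _ ≤ S 1 := this
  have hfin : S N ≤ S 1 / (1 + C⁻¹) ^ (N - 1) := by
    have := hdecay (N - 1) (by omega)
    have hN' : 1 + (N - 1) = N := by omega
    rwa [hN'] at this
  have hS1 : S 1 ≤ C * a 0 := by
    have := htail 0 (by omega)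
    simpa using this
  have haN : a N = S N := by simp [hS]
  rw [haN, div_mul_eq_mul_div]
  calc S N ≤ S 1 / (1 + C⁻¹) ^ (N - 1) := hfin
    _ ≤ C * a 0 / (1 + C⁻¹) ^ (N - 1) := by
        apply div_le_div_of_nonneg_right hS1 (by positivity)
end

section
/- For the matrix A = [[4,2,3,0],[2,2,0,3],[1,0,2,-2],[0,1,-2,4]], the vectors (2, -2√2-1, 0, 1) and (-2√2+1, 2, 1, 0) are eigenvectors with eigenvalue 3-2√2, and the vectors (2, 2√2-1, 0, 1) and (2√2+1, 2, 1, 0) are eigenvectors with eigenvalue 3+2√2. Moreover, the span of the first pair (the contracting subspace) intersects the coordinate subspace span(e_1, e_2) only in 0, and the span of the second pair (the expanding subspace) also intersects span(e_3, e_4) only in 0. -/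
/-- The explicit eigenvectors of `A = [[4,2,3,0],[2,2,0,3],[1,0,2,-2],[0,1,-2,4]]`:
`(2, -2√2-1, 0, 1)` and `(-2√2+1, 2, 1, 0)` are eigenvectors with eigenvalue `3 - 2√2`,
`(2, 2√2-1, 0, 1)` and `(2√2+1, 2, 1, 0)` are eigenvectors with eigenvalue `3 + 2√2`;
the contracting subspace (span of the first pair) meets `span(e₁,e₂)` only in `0`, and the
expanding subspace (span of the second pair) meets `span(e₃,e₄)` only in `0`. -/
theorem eigenvectors_of_gluing_matrix :
    let A : Matrix (Fin 4) (Fin 4) ℝ := !![4, 2, 3, 0; 2, 2, 0, 3; 1, 0, 2, -2; 0, 1, -2, 4]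
    let v1 : Fin 4 → ℝ := ![2, -2 * Real.sqrt 2 - 1, 0, 1]
    let v2 : Fin 4 → ℝ := ![-2 * Real.sqrt 2 + 1, 2, 1, 0]
    let w1 : Fin 4 → ℝ := ![2, 2 * Real.sqrt 2 - 1, 0, 1]
    let w2 : Fin 4 → ℝ := ![2 * Real.sqrt 2 + 1, 2, 1, 0]
    (v1 ≠ 0 ∧ A.mulVec v1 = (3 - 2 * Real.sqrt 2) • v1) ∧
    (v2 ≠ 0 ∧ A.mulVec v2 = (3 - 2 * Real.sqrt 2) • v2) ∧
    (w1 ≠ 0 ∧ A.mulVec w1 = (3 + 2 * Real.sqrt 2) • w1) ∧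
    (w2 ≠ 0 ∧ A.mulVec w2 = (3 + 2 * Real.sqrt 2) • w2) ∧
    Submodule.span ℝ {v1, v2} ⊓
      Submodule.span ℝ {(Pi.single 0 1 : Fin 4 → ℝ), (Pi.single 1 1 : Fin 4 → ℝ)} = ⊥ ∧
    Submodule.span ℝ {w1, w2} ⊓
      Submodule.span ℝ {(Pi.single 2 1 : Fin 4 → ℝ), (Pi.single 3 1 : Fin 4 → ℝ)} = ⊥ := by
  intro A v1 v2 w1 w2
  have h2 : Real.sqrt 2 ^ 2 = 2 := Real.sq_sqrt (by norm_num)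
  have hne : ∀ u : Fin 4 → ℝ, u 2 = 1 ∨ u 3 = 1 → u ≠ 0 := by
    rintro u (h | h) h0 <;> simp [h0] at h
  refine ⟨⟨hne v1 (Or.inr rfl), ?_⟩, ⟨hne v2 (Or.inl rfl), ?_⟩,
    ⟨hne w1 (Or.inr rfl), ?_⟩, ⟨hne w2 (Or.inl rfl), ?_⟩, ?_, ?_⟩
  · funext i; fin_cases i <;>
      simp [A, v1, Matrix.mulVec, dotProduct, Fin.sum_univ_four] <;> nlinarith [h2]
  · funext i; fin_cases i <;>
      simp [A, v2, Matrix.mulVec, dotProduct, Fin.sum_univ_four] <;> nlinarith [h2]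
  · funext i; fin_cases i <;>
      simp [A, w1, Matrix.mulVec, dotProduct, Fin.sum_univ_four] <;> nlinarith [h2]
  · funext i; fin_cases i <;>
      simp [A, w2, Matrix.mulVec, dotProduct, Fin.sum_univ_four] <;> nlinarith [h2]
  · rw [eq_bot_iff]
    rintro x ⟨hx1, hx2⟩
    rw [SetLike.mem_coe, Submodule.mem_span_pair] at hx1
    rw [SetLike.mem_coe, Submodule.mem_span_pair] at hx2
    obtain ⟨a, b, rfl⟩ := hx1
    obtain ⟨c, d, h⟩ := hx2
    have h2' := congrFun h 2
    have h3' := congrFun h 3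
    simp [v1, v2, Pi.single_apply] at h2' h3'
    simp only [Submodule.mem_bot]
    subst h2' h3'
    simp [v1, v2]
  · rw [eq_bot_iff]
    rintro x ⟨hx1, hx2⟩
    rw [SetLike.mem_coe, Submodule.mem_span_pair] at hx1
    rw [SetLike.mem_coe, Submodule.mem_span_pair] at hx2
    obtain ⟨a, b, rfl⟩ := hx1
    obtain ⟨c, d, h⟩ := hx2
    have h0' := congrFun h 0
    have h1' := congrFun h 1
    simp [w1, w2, Pi.single_apply] at h0' h1'
    have ha : a = 0 := by nlinarith [h2, Real.sqrt_nonneg 2]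
    have hb : b = 0 := by nlinarith [h2, Real.sqrt_nonneg 2]
    subst ha hb
    simp
end

section
/- Let G = (V, E) be a connected d-regular graph with (discrete) spectral gap c_G > 0, meaning that for every mean-zero function f ∈ ℓ²(V), Σ_{v∈V}|f(v)|² ≤ c_G^{-2} Σ_{v∈V} |Σ_{v'∼v}(f(v') - f(v))|². Let M = ⋃_{v∈V} B_v be a Riemannian manifold written as a union of pieces B_v, one per vertex, all isometric to a fixed compact manifold B (with pieces glued along edges of G), each satisfying a Poincaré inequality: for every v and every C¹ function g, ∫_{B_v}|g - avg_{B_v} g|² ≤ p_B ∫_{B_v}|∇g|², and similarly on unions B_v ∪ B_{v'} of adjacent pieces with the same constant p_B. Then every mean-zero C¹ function g on M satisfies ∫_M |g|² ≤ C(d, p_B, c_G, vol(B)) ∫_M |∇g|², i.e., M has a spectral gap for functions controlled by the graph spectral gap and the local Poincaré constants. -/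
/-!
Write `m v` for the average of `g` over the piece `B v`. On each piece
`∫_{B v} g² = ∫_{B v} (g - m v)² + |B| (m v)²`, and the first term is controlled by the Poincaré
inequality on `B v`. Since `g` has mean zero, so does `m`, and the spectral gap of `G` bounds
`∑ (m v)²` by the squared discrete Laplacian of `m`. For an edge `v ∼ w`, both `m v` and `m w` are
close to the average of `g` over `B v ∪ B w`, so the Poincaré inequality on that union bounds
`(m w - m v)²` by the energy of `g` on the two pieces; in a `d`-regular graph every piece is
counted `2d` times.
-/

open MeasureTheory Finset Function
open scoped ENNReal

section Variance

variable {α : Type*} [MeasurableSpace α] {μ : Measure α} [IsFiniteMeasure μ] {g : α → ℝ}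

lemma integrable_sub_const_sq (hg : Integrable g μ) (hg2 : Integrable (fun x => g x ^ 2) μ)
    (c : ℝ) : Integrable (fun x => (g x - c) ^ 2) μ := by
  have hexp : (fun x => (g x - c) ^ 2) = fun x => g x ^ 2 - 2 * c * g x + c ^ 2 := by
    funext x; ring
  have hlin : Integrable (fun x => g x ^ 2 - 2 * c * g x) μ := hg2.sub (hg.const_mul _)
  rw [hexp]
  exact hlin.add (integrable_const _)

lemma integral_sub_const_sq (hg : Integrable g μ) (hg2 : Integrable (fun x => g x ^ 2) μ)
    (c : ℝ) :
    ∫ x, (g x - c) ^ 2 ∂μ = ∫ x, g x ^ 2 ∂μ - 2 * c * ∫ x, g x ∂μ + μ.real Set.univ * c ^ 2 := by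
  have hexp : (fun x => (g x - c) ^ 2) = fun x => g x ^ 2 - 2 * c * g x + c ^ 2 := by
    funext x; ring
  have hlin : Integrable (fun x => g x ^ 2 - 2 * c * g x) μ := hg2.sub (hg.const_mul _)
  rw [hexp, integral_add hlin (integrable_const _),
    integral_sub hg2 (hg.const_mul _), integral_const_mul, integral_const, smul_eq_mul]

lemma integral_sub_const_sq_eq_integral_sub_average_sq_add (hg : Integrable g μ)
    (hg2 : Integrable (fun x => g x ^ 2) μ) (c : ℝ) :
    ∫ x, (g x - c) ^ 2 ∂μ
      = ∫ x, (g x - ⨍ y, g y ∂μ) ^ 2 ∂μ + μ.real Set.univ * (⨍ y, g y ∂μ - c) ^ 2 := by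
  rw [integral_sub_const_sq hg hg2, integral_sub_const_sq hg hg2, ← measure_smul_average μ g,
    smul_eq_mul]
  ring

end Variance

section Pieces

variable {M : Type*} [MeasurableSpace M] {μ : Measure M} {g : M → ℝ}

lemma measureReal_mul_sq_setAverage_sub_le {s t : Set M} (hst : s ⊆ t) (ht : μ t ≠ ∞)
    (hg : IntegrableOn g t μ) (hg2 : IntegrableOn (fun x => g x ^ 2) t μ) (c : ℝ) :
    μ.real s * (⨍ x in s, g x ∂μ - c) ^ 2 ≤ ∫ x in t, (g x - c) ^ 2 ∂μ := by
  have := Fact.mk ht.lt_top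
  have := Fact.mk ((measure_mono hst).trans_lt ht.lt_top)
  have hs := integral_sub_const_sq_eq_integral_sub_average_sq_add
    (hg.mono_set hst) (hg2.mono_set hst) c
  rw [measureReal_restrict_apply_univ] at hs
  calc μ.real s * (⨍ x in s, g x ∂μ - c) ^ 2 ≤ ∫ x in s, (g x - c) ^ 2 ∂μ := by
        rw [hs]; exact le_add_of_nonneg_left (integral_nonneg fun _ => sq_nonneg _)
    _ ≤ ∫ x in t, (g x - c) ^ 2 ∂μ :=
        setIntegral_mono_set (integrable_sub_const_sq hg hg2 c)
          (ae_of_all _ fun _ => sq_nonneg _) hst.eventuallyLE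

lemma measureReal_mul_sq_setAverage_sub_setAverage_le {s t : Set M} (hst : μ s = μ t)
    (hs : μ s ≠ ∞) (hg : IntegrableOn g (s ∪ t) μ)
    (hg2 : IntegrableOn (fun x => g x ^ 2) (s ∪ t) μ) (c : ℝ) :
    μ.real s * (⨍ x in t, g x ∂μ - ⨍ x in s, g x ∂μ) ^ 2
      ≤ 4 * ∫ x in s ∪ t, (g x - c) ^ 2 ∂μ := by
  have hU : μ (s ∪ t) ≠ ∞ := measure_union_ne_top hs (hst ▸ hs)
  have h_s := measureReal_mul_sq_setAverage_sub_le Set.subset_union_left hU hg hg2 c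
  have h_t := measureReal_mul_sq_setAverage_sub_le Set.subset_union_right hU hg hg2 c
  rw [measureReal_def, ← hst, ← measureReal_def] at h_t
  -- `(x - y)² + (x + y - 2c)² = 2 (x - c)² + 2 (y - c)²`
  nlinarith [mul_nonneg (measureReal_nonneg (μ := μ) (s := s))
    (sq_nonneg (⨍ x in t, g x ∂μ + ⨍ x in s, g x ∂μ - 2 * c))]

variable {E : Type*} [NormedAddCommGroup E] [NormedSpace ℝ E]
  {ι : Type*} [Fintype ι] {B : ι → Set M}

lemma integral_eq_sum_setIntegral (hB : ∀ i, NullMeasurableSet (B i) μ)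
    (hdisj : Pairwise (AEDisjoint μ on B)) (hcover : ⋃ i, B i = Set.univ) {f : M → E}
    (hf : Integrable f μ) : ∫ x, f x ∂μ = ∑ i, ∫ x in B i, f x ∂μ := by
  have h := integral_iUnion_ae hB hdisj (by rw [hcover]; exact hf.integrableOn)
  rwa [hcover, Measure.restrict_univ, tsum_fintype] at h

lemma sum_measureReal_smul_setAverage (hB : ∀ i, NullMeasurableSet (B i) μ)
    (hdisj : Pairwise (AEDisjoint μ on B)) (hcover : ⋃ i, B i = Set.univ)
    (hfin : ∀ i, μ (B i) ≠ ∞) {f : M → E} (hf : Integrable f μ) :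
    ∑ i, μ.real (B i) • ⨍ x in B i, f x ∂μ = ∫ x, f x ∂μ := by
  simp only [measure_smul_setAverage _ (hfin _), integral_eq_sum_setIntegral hB hdisj hcover hf]

lemma integral_sq_eq_sum_setIntegral_sub_setAverage_sq_add
    (hB : ∀ i, NullMeasurableSet (B i) μ) (hdisj : Pairwise (AEDisjoint μ on B))
    (hcover : ⋃ i, B i = Set.univ) (hfin : ∀ i, μ (B i) ≠ ∞) (hg : Integrable g μ)
    (hg2 : Integrable (fun x => g x ^ 2) μ) :
    ∫ x, g x ^ 2 ∂μ = ∑ i, (∫ x in B i, (g x - ⨍ y in B i, g y ∂μ) ^ 2 ∂μ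
      + μ.real (B i) * (⨍ y in B i, g y ∂μ) ^ 2) := by
  rw [integral_eq_sum_setIntegral hB hdisj hcover hg2]
  refine sum_congr rfl fun i _ => ?_
  have := Fact.mk (hfin i).lt_top
  simpa [measureReal_restrict_apply_univ] using
    integral_sub_const_sq_eq_integral_sub_average_sq_add hg.integrableOn hg2.integrableOn 0

end Pieces

namespace SimpleGraph

variable {V : Type*} [Fintype V] {G : SimpleGraph V} [DecidableRel G.Adj] {d : ℕ}

lemma IsRegularOfDegree.sum_sum_neighborFinset_add (hG : G.IsRegularOfDegree d) (E : V → ℝ) :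
    ∑ v, ∑ w ∈ G.neighborFinset v, (E v + E w) = 2 * d * ∑ v, E v := by
  have hswap : ∑ v, ∑ w ∈ G.neighborFinset v, E w = ∑ w, ∑ _v ∈ G.neighborFinset w, E w :=
    sum_comm' fun v w => by simp [adj_comm]
  have hconst : ∀ v, ∑ _w ∈ G.neighborFinset v, E v = d * E v := fun v => by
    rw [sum_const, card_neighborFinset_eq_degree, hG v, nsmul_eq_mul]
  simp only [sum_add_distrib, hswap, hconst, ← mul_sum]
  ring

lemma IsRegularOfDegree.sum_sq_sum_neighborFinset_sub_le (hG : G.IsRegularOfDegree d)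
    {f E : V → ℝ} {K : ℝ} (hf : ∀ v w, G.Adj v w → (f w - f v) ^ 2 ≤ K * (E v + E w)) :
    ∑ v, (∑ w ∈ G.neighborFinset v, (f w - f v)) ^ 2 ≤ 2 * d ^ 2 * K * ∑ v, E v := by
  calc ∑ v, (∑ w ∈ G.neighborFinset v, (f w - f v)) ^ 2
      ≤ ∑ v, d * ∑ w ∈ G.neighborFinset v, K * (E v + E w) := by
        gcongr with v
        refine sq_sum_le_card_mul_sum_sq.trans ?_
        rw [card_neighborFinset_eq_degree, hG v]
        gcongr with w hw
        exact hf v w ((mem_neighborFinset G v w).mp hw)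
    _ = 2 * d ^ 2 * K * ∑ v, E v := by
        simp only [← mul_sum, hG.sum_sum_neighborFinset_add]
        ring

end SimpleGraph

theorem expander_gluing_function_gap_general
    (d : ℕ) (pB cG volB : ℝ) (hpB : 0 < pB) (hvolB : 0 < volB) :
    ∃ Cst : ℝ, 0 < Cst ∧
      ∀ (V : Type) [Fintype V] (G : SimpleGraph V) [DecidableRel G.Adj],
        G.Connected →
        G.IsRegularOfDegree d →
        -- `G` has discrete spectral gap `c_G`
        (∀ f : V → ℝ, ∑ v, f v = 0 →
          ∑ v, (f v) ^ 2 ≤ cG⁻¹ ^ 2 * ∑ v, (∑ w ∈ G.neighborFinset v, (f w - f v)) ^ 2) →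
        ∀ (M : Type) [MeasurableSpace M] (μ : Measure M) (B : V → Set M),
          (∀ v, MeasurableSet (B v)) →
          (⋃ v, B v) = Set.univ →
          (∀ v w, v ≠ w → μ (B v ∩ B w) = 0) →
          (∀ v, μ (B v) = ENNReal.ofReal volB) →
          ∀ g grad : M → ℝ,
            Integrable g μ →
            Integrable (fun x => (g x) ^ 2) μ →
            Integrable (fun x => (grad x) ^ 2) μ →
            (∫ x, g x ∂μ) = 0 →
            -- Poincaré inequality on each piece
            (∀ v, ∫ x in B v, (g x - volB⁻¹ * ∫ y in B v, g y ∂μ) ^ 2 ∂μ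
                ≤ pB * ∫ x in B v, (grad x) ^ 2 ∂μ) →
            -- Poincaré inequality on each union of adjacent pieces
            (∀ v w, G.Adj v w →
              ∫ x in B v ∪ B w,
                  (g x - (μ (B v ∪ B w)).toReal⁻¹ * ∫ y in B v ∪ B w, g y ∂μ) ^ 2 ∂μ
                ≤ pB * ∫ x in B v ∪ B w, (grad x) ^ 2 ∂μ) →
            ∫ x, (g x) ^ 2 ∂μ ≤ Cst * ∫ x, (grad x) ^ 2 ∂μ := by
  refine ⟨pB * (1 + 8 * d ^ 2 * cG⁻¹ ^ 2), by positivity, ?_⟩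
  intro V _ G _ _ hreg hgap M _ μ B hB hcover hdisj hvol g grad hg hg2 hgrad2 hmean hPv hPvw
  have hB₀ : ∀ v, NullMeasurableSet (B v) μ := fun v => (hB v).nullMeasurableSet
  have hdisj' : Pairwise (AEDisjoint μ on B) := fun v w hvw => hdisj v w hvw
  have hfin : ∀ v, μ (B v) ≠ ∞ := fun v => hvol v ▸ ENNReal.ofReal_ne_top
  have hreal : ∀ v, μ.real (B v) = volB := fun v => by
    rw [measureReal_def, hvol, ENNReal.toReal_ofReal hvolB.le]
  set m : V → ℝ := fun v => ⨍ x in B v, g x ∂μ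
  set E : V → ℝ := fun v => ∫ x in B v, grad x ^ 2 ∂μ
  have hm : ∑ v, m v = 0 := by
    have := sum_measureReal_smul_setAverage hB₀ hdisj' hcover hfin hg
    simp only [hreal, smul_eq_mul, ← mul_sum, hmean] at this
    exact (mul_eq_zero.mp this).resolve_left hvolB.ne'
  have hpiece : ∀ v, ∫ x in B v, (g x - m v) ^ 2 ∂μ ≤ pB * E v := fun v => by
    have h := hPv v
    rwa [← hreal v, ← smul_eq_mul, ← setAverage_eq] at h
  have hedge : ∀ v w, G.Adj v w → (m w - m v) ^ 2 ≤ 4 * pB / volB * (E v + E w) := by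
    intro v w hvw
    have hU := hPvw v w hvw
    rw [← measureReal_def, ← smul_eq_mul, ← setAverage_eq, setIntegral_union₀ (hdisj' hvw.ne)
      (hB₀ w) hgrad2.integrableOn hgrad2.integrableOn] at hU
    have := measureReal_mul_sq_setAverage_sub_setAverage_le ((hvol v).trans (hvol w).symm)
      (hfin v) hg.integrableOn hg2.integrableOn (⨍ x in B v ∪ B w, g x ∂μ)
    rw [hreal] at this
    rw [div_mul_eq_mul_div, le_div_iff₀ hvolB]
    linarith
  rw [integral_sq_eq_sum_setIntegral_sub_setAverage_sq_add hB₀ hdisj' hcover hfin hg hg2,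
    integral_eq_sum_setIntegral hB₀ hdisj' hcover hgrad2]
  calc ∑ v, (∫ x in B v, (g x - m v) ^ 2 ∂μ + μ.real (B v) * m v ^ 2)
      ≤ pB * ∑ v, E v + volB * ∑ v, m v ^ 2 := by
        simp only [hreal, mul_sum, ← sum_add_distrib]
        exact sum_le_sum fun v _ => add_le_add_left (hpiece v) _
    _ ≤ pB * ∑ v, E v + volB * (cG⁻¹ ^ 2 * (2 * d ^ 2 * (4 * pB / volB) * ∑ v, E v)) := by
        gcongr
        exact (hgap m hm).trans (by gcongr; exact hreg.sum_sq_sum_neighborFinset_sub_le hedge)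
    _ = pB * (1 + 8 * d ^ 2 * cG⁻¹ ^ 2) * ∑ v, E v := by
        field_simp
        ring

/-- Gluing pieces along a `d`-regular expander graph yields a uniform spectral gap for
mean-zero functions: if `G` is a connected `d`-regular graph with discrete spectral gap `c_G`,
and `M = ⋃_v B_v` is a manifold decomposed into essentially disjoint pieces of volume `vol(B)`
satisfying Poincaré inequalities with constant `p_B` on each piece and on each adjacent union,
then every mean-zero function `g` satisfies `∫|g|² ≤ C·∫|∇g|²` with `C` depending only on
`d`, `p_B`, `c_G` and `vol(B)`. -/
theorem expander_gluing_function_gap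
    (d : ℕ) (pB cG volB : ℝ) (hd : 0 < d) (hpB : 0 < pB) (hcG : 0 < cG) (hvolB : 0 < volB) :
    ∃ Cst : ℝ, 0 < Cst ∧
      ∀ (V : Type) [Fintype V] (G : SimpleGraph V) [DecidableRel G.Adj],
        G.Connected →
        G.IsRegularOfDegree d →
        -- `G` has discrete spectral gap `c_G`
        (∀ f : V → ℝ, ∑ v, f v = 0 →
          ∑ v, (f v) ^ 2 ≤ cG⁻¹ ^ 2 * ∑ v, (∑ w ∈ G.neighborFinset v, (f w - f v)) ^ 2) →
        ∀ (M : Type) [MeasurableSpace M] (μ : Measure M) (B : V → Set M),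
          (∀ v, MeasurableSet (B v)) →
          (⋃ v, B v) = Set.univ →
          (∀ v w, v ≠ w → μ (B v ∩ B w) = 0) →
          (∀ v, μ (B v) = ENNReal.ofReal volB) →
          ∀ g grad : M → ℝ,
            Integrable g μ →
            Integrable (fun x => (g x) ^ 2) μ →
            Integrable (fun x => (grad x) ^ 2) μ →
            (∫ x, g x ∂μ) = 0 →
            -- Poincaré inequality on each piece
            (∀ v, ∫ x in B v, (g x - volB⁻¹ * ∫ y in B v, g y ∂μ) ^ 2 ∂μ
                ≤ pB * ∫ x in B v, (grad x) ^ 2 ∂μ) →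
            -- Poincaré inequality on each union of adjacent pieces
            (∀ v w, G.Adj v w →
              ∫ x in B v ∪ B w,
                  (g x - (μ (B v ∪ B w)).toReal⁻¹ * ∫ y in B v ∪ B w, g y ∂μ) ^ 2 ∂μ
                ≤ pB * ∫ x in B v ∪ B w, (grad x) ^ 2 ∂μ) →
            ∫ x, (g x) ^ 2 ∂μ ≤ Cst * ∫ x, (grad x) ^ 2 ∂μ :=
  expander_gluing_function_gap_general d pB cG volB hpB hvolB
end

section
/- Let B_0, …, B_{N+1} be the blocks of the glued manifold M, where consecutive blocks are glued along a genus-g surface and the gluings are chosen so that the image of H¹(B_{i-1}; R) → H¹(Σ_{i-1}; R) intersects the image of H¹(B_i; R) → H¹(Σ_{i-1}; R) trivially for each i, and so that the restriction map s : H¹(B_i; R) → H¹(Σ_{i-1}; R) ⊕ H¹(Σ_i; R) is injective. Then for each i, the restriction map H¹(B_{i-1} ∪ B_i ∪ B_{i+1}; R) → H¹(B_i; R) is the zero map. -/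
/-- (Abstract form of) the proposition that homology is killed locally in the block
construction: if the images of `H¹(B_{i-1}) → H¹(Σ_{i-1})` and `H¹(B_i) → H¹(Σ_{i-1})`
intersect trivially, similarly on `Σ_i`, and `H¹(B_i) → H¹(Σ_{i-1}) ⊕ H¹(Σ_i)` is injective,
then the restriction map `H¹(B_{i-1} ∪ B_i ∪ B_{i+1}; ℝ) → H¹(B_i; ℝ)` is zero. -/
theorem homology_killed_locally
    (H A1 A2 A3 S1 S2 : Type*)
    [AddCommGroup H] [Module ℝ H]
    [AddCommGroup A1] [Module ℝ A1]
    [AddCommGroup A2] [Module ℝ A2]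
    [AddCommGroup A3] [Module ℝ A3]
    [AddCommGroup S1] [Module ℝ S1]
    [AddCommGroup S2] [Module ℝ S2]
    -- restriction maps from the triple union to each block
    (r1 : H →ₗ[ℝ] A1) (r2 : H →ₗ[ℝ] A2) (r3 : H →ₗ[ℝ] A3)
    -- restriction maps from blocks to the separating surfaces
    (a1 : A1 →ₗ[ℝ] S1) (b1 : A2 →ₗ[ℝ] S1) (b2 : A2 →ₗ[ℝ] S2) (c2 : A3 →ₗ[ℝ] S2)
    -- restrictions of a class on the triple union agree on the separating surfaces
    (hglue1 : ∀ x, a1 (r1 x) = b1 (r2 x))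
    (hglue2 : ∀ x, b2 (r2 x) = c2 (r3 x))
    -- the images from the two sides intersect trivially
    (hint1 : LinearMap.range a1 ⊓ LinearMap.range b1 = ⊥)
    (hint2 : LinearMap.range b2 ⊓ LinearMap.range c2 = ⊥)
    -- `s : H¹(B_i) → H¹(Σ_{i-1}) ⊕ H¹(Σ_i)` is injective
    (hinj : ∀ y : A2, b1 y = 0 → b2 y = 0 → y = 0) :
    ∀ x, r2 x = 0 := by
  intro x
  have h1 : b1 (r2 x) = 0 := by
    have : b1 (r2 x) ∈ LinearMap.range a1 ⊓ LinearMap.range b1 := by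
      exact ⟨⟨r1 x, hglue1 x⟩, ⟨r2 x, rfl⟩⟩
    rw [hint1] at this; exact this
  have h2 : b2 (r2 x) = 0 := by
    have : b2 (r2 x) ∈ LinearMap.range b2 ⊓ LinearMap.range c2 := by
      exact ⟨⟨r2 x, rfl⟩, ⟨r3 x, (hglue2 x).symm⟩⟩
    rw [hint2] at this; exact this
  exact hinj _ h1 h2
end

section
/- (Abstract version of the torsion lower bound.) Let Λ = Z^{2g} ⊂ V = R^{2g}, let λ_0 ∈ (0,1], δ > 0, and suppose Λ⁺, Λ⁻ ≤ Λ are subgroups and V = V⁺ ⊕ V⁻ a direct sum decomposition of V with Λ^± ⊆ V^±, such that: (a) every nonzero element of Λ has norm ≥ ε_0 > 0 in a family of 'slice norms' ‖·‖_n (n = -N, …, N) that are pairwise comparable with uniform constant; (b) for v ∈ Λ⁺ + Λ⁻ with decomposition v = v⁺ + v⁻ one has ‖v^±‖_0 ≤ C λ_0^{-1/2} ‖v‖_0 (uniform transversality); and (c) ‖v⁺‖_{N-1} ≤ C λ_0^{-1/2}(1-δ)^N ‖v⁺‖_0 and ‖v⁻‖_{-N+1} ≤ C λ_0^{-1/2}(1-δ)^N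 ‖v⁻‖_0 (exponential decay). Then every nonzero v ∈ Λ⁺ + Λ⁻ satisfies ‖v‖_0 ≥ c λ_0 (1+δ)^N, and consequently #(Λ/(Λ⁺ + Λ⁻)) ≥ c' λ_0^{2g} (1+δ)^{2gN} for constants c, c' depending only on g, C, ε_0 and the norm comparability constants. -/
/-!
A nonzero `v = v⁺ + v⁻ ∈ Λ⁺ + Λ⁻` has a nonzero integral component, say `v⁺`. In the slice
`N - 1` it still has norm at least `ε₀`, while decay and transversality give
`ε₀ ≤ ‖v⁺‖_{N-1} ≤ C²λ₀⁻¹(1-δ)^N ‖v‖₀`; as `(1-δ)(1+δ) ≤ 1`, this is `‖v‖₀ ≥ ε₀C⁻²λ₀(1+δ)^N`.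
Consequently two distinct integral points of a cube of side `≍ λ₀(1+δ)^N` differ by a vector
too short to lie in `Λ⁺ + Λ⁻`, so the cube injects into `Λ/(Λ⁺ + Λ⁻)`.
-/

/-- Euclidean norm on `Fin n → ℝ`. -/
noncomputable def eNorm {n : ℕ} (v : Fin n → ℝ) : ℝ := Real.sqrt (∑ i, v i ^ 2)

/-- Coefficientwise inclusion of the integer lattice `ℤ^n` into `ℝ^n`. -/
def latInc {n : ℕ} (v : Fin n → ℤ) : Fin n → ℝ := fun i => (v i : ℝ)

lemma latInc_add {n : ℕ} (a b : Fin n → ℤ) : latInc (a + b) = latInc a + latInc b := by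
  funext i; simp [latInc]

lemma eNorm_le_sqrt_mul_of_abs_le {n : ℕ} {v : Fin n → ℝ} {M : ℝ} (hM : 0 ≤ M)
    (hv : ∀ i, |v i| ≤ M) : eNorm v ≤ √n * M := by
  have hsum : ∑ i, v i ^ 2 ≤ n * M ^ 2 := by
    calc ∑ i, v i ^ 2 ≤ ∑ _i : Fin n, M ^ 2 :=
          Finset.sum_le_sum fun i _ => sq_le_sq' (abs_le.1 (hv i)).1 (abs_le.1 (hv i)).2
      _ = n * M ^ 2 := by simp
  calc eNorm v ≤ √(n * M ^ 2) := Real.sqrt_le_sqrt hsum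
    _ = √n * M := by rw [Real.sqrt_mul n.cast_nonneg, Real.sqrt_sq hM]

lemma abs_sub_natCast_fin_le {K : ℕ} (a b : Fin (K + 1)) : |((a : ℕ) : ℝ) - (b : ℕ)| ≤ K := by
  have ha : ((a : ℕ) : ℝ) ≤ K := by exact_mod_cast Nat.lt_succ_iff.mp a.isLt
  have hb : ((b : ℕ) : ℝ) ≤ K := by exact_mod_cast Nat.lt_succ_iff.mp b.isLt
  rw [abs_le]
  constructor <;> linarith [Nat.cast_nonneg (α := ℝ) (a : ℕ), Nat.cast_nonneg (α := ℝ) (b : ℕ)]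

theorem pow_le_mk_quotient_of_le_eNorm {n K : ℕ} {R : ℝ} (L : Submodule ℤ (Fin n → ℤ))
    (hK : √n * K < R) (hL : ∀ v ∈ L, v ≠ 0 → R ≤ eNorm (latInc v)) :
    (((K + 1) ^ n : ℕ) : Cardinal) ≤ Cardinal.mk ((Fin n → ℤ) ⧸ L) := by
  let box : (Fin n → Fin (K + 1)) → (Fin n → ℤ) ⧸ L :=
    fun p => Submodule.Quotient.mk fun i => ((p i : ℕ) : ℤ)
  have hbox : Function.Injective box := by
    intro p q hpq
    by_contra hne
    set d : Fin n → ℤ := fun i => ((p i : ℕ) : ℤ) - ((q i : ℕ) : ℤ)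
    have hdL : d ∈ L := (Submodule.Quotient.eq L).1 hpq
    have hd0 : d ≠ 0 := fun h0 => hne <| funext fun i => Fin.ext <| by
      simpa [d, sub_eq_zero] using congrFun h0 i
    have hdK : eNorm (latInc d) ≤ √n * K :=
      eNorm_le_sqrt_mul_of_abs_le K.cast_nonneg fun i => by
        simpa [latInc, d] using abs_sub_natCast_fin_le (p i) (q i)
    linarith [hL d hdL hd0]
  simpa using Cardinal.mk_le_of_injective hbox

lemma ceil_pow_le_floor_add_one_pow {x : ℝ} (hx : 0 ≤ x) (n : ℕ) :
    ⌈x ^ n⌉₊ ≤ (⌊x⌋₊ + 1) ^ n := by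
  rw [Nat.ceil_le]
  push_cast
  exact pow_le_pow_left₀ hx (Nat.lt_floor_add_one x).le n

lemma sqrt_mul_floor_div_lt {n : ℕ} (hn : 0 < n) {R : ℝ} (hR : 0 < R) :
    √n * ⌊R / (2 * √n)⌋₊ < R := by
  have hs : 0 < √(n : ℝ) := Real.sqrt_pos.2 (by exact_mod_cast hn)
  calc √n * ⌊R / (2 * √n)⌋₊ ≤ √n * (R / (2 * √n)) :=
        mul_le_mul_of_nonneg_left (Nat.floor_le (by positivity)) hs.le
    _ = R / 2 := by field_simp
    _ < R := half_lt_self hR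

lemma le_of_decay_of_transversal {ε C lam δ x y : ℝ} {N : ℕ} (hε : 0 < ε) (hC : 0 ≤ C)
    (hlam : 0 < lam) (hδ : 0 ≤ δ) (hδ1 : δ ≤ 1)
    (hdecay : ε ≤ C * (√lam)⁻¹ * (1 - δ) ^ N * x) (htrans : x ≤ C * (√lam)⁻¹ * y) :
    ε / C ^ 2 * lam * (1 + δ) ^ N ≤ y := by
  have hC0 : C ≠ 0 := by rintro rfl; simp at hdecay; linarith
  have hchain : ε ≤ C ^ 2 / lam * ((1 - δ) ^ N * y) := by
    have hsq : (√lam)⁻¹ * (√lam)⁻¹ = lam⁻¹ := by rw [← mul_inv, Real.mul_self_sqrt hlam.le]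
    calc ε ≤ C * (√lam)⁻¹ * (1 - δ) ^ N * (C * (√lam)⁻¹ * y) :=
          hdecay.trans (mul_le_mul_of_nonneg_left htrans (by positivity [sub_nonneg.2 hδ1]))
      _ = C ^ 2 / lam * ((1 - δ) ^ N * y) := by rw [div_eq_mul_inv, ← hsq]; ring
  have hdecayed : ε / C ^ 2 * lam ≤ (1 - δ) ^ N * y :=
    calc ε / C ^ 2 * lam ≤ C ^ 2 / lam * ((1 - δ) ^ N * y) / C ^ 2 * lam := by gcongr
      _ = (1 - δ) ^ N * y := by field_simp
  have hy : 0 ≤ y :=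
    (pos_of_mul_pos_right ((by positivity : 0 < ε / C ^ 2 * lam).trans_le hdecayed)
      (pow_nonneg (sub_nonneg.2 hδ1) N)).le
  have hprod : (1 - δ) ^ N * (1 + δ) ^ N ≤ 1 := by
    rw [← mul_pow]; exact pow_le_one₀ (by nlinarith) (by nlinarith)
  calc ε / C ^ 2 * lam * (1 + δ) ^ N ≤ (1 - δ) ^ N * y * (1 + δ) ^ N := by gcongr
    _ = (1 - δ) ^ N * (1 + δ) ^ N * y := by ring
    _ ≤ y := mul_le_of_le_one_left hy hprod

theorem le_nrm_zero_of_mem_sup {n N : ℕ} {ε0 C lam δ : ℝ} (hε0 : 0 < ε0) (hC : 1 ≤ C)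
    (hlam : 0 < lam) (hlam1 : lam ≤ 1) (hδ : 0 ≤ δ) (hδ1 : δ ≤ 1)
    {Lp Lm : Submodule ℤ (Fin n → ℤ)} {Vp Vm : Submodule ℝ (Fin n → ℝ)}
    (hLp : ∀ v ∈ Lp, latInc v ∈ Vp) (hLm : ∀ v ∈ Lm, latInc v ∈ Vm)
    {Nrm : ℤ → (Fin n → ℝ) → ℝ}
    (hlattice : ∀ m : ℤ, |m| ≤ (N : ℤ) → ∀ v : Fin n → ℤ, v ≠ 0 → ε0 ≤ Nrm m (latInc v))
    (htrans : ∀ (v vp vm : Fin n → ℝ), vp ∈ Vp → vm ∈ Vm → v = vp + vm →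
      Nrm 0 vp ≤ C * (√lam)⁻¹ * Nrm 0 v ∧ Nrm 0 vm ≤ C * (√lam)⁻¹ * Nrm 0 v)
    (hdecayP : ∀ vp ∈ Vp, Nrm ((N : ℤ) - 1) vp ≤ C * (√lam)⁻¹ * (1 - δ) ^ N * Nrm 0 vp)
    (hdecayM : ∀ vm ∈ Vm, Nrm (-(N : ℤ) + 1) vm ≤ C * (√lam)⁻¹ * (1 - δ) ^ N * Nrm 0 vm)
    {v : Fin n → ℤ} (hv : v ∈ Lp ⊔ Lm) (hv0 : v ≠ 0) :
    ε0 / C ^ 2 * lam * (1 + δ) ^ N ≤ Nrm 0 (latInc v) := by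
  -- for `N = 0` the slice `N - 1` lies outside the range where the lattice bound holds
  obtain rfl | hN := Nat.eq_zero_or_pos N
  · calc ε0 / C ^ 2 * lam * (1 + δ) ^ 0 ≤ ε0 / C ^ 2 := by
          simpa using mul_le_of_le_one_right (by positivity) hlam1
      _ ≤ ε0 := div_le_self hε0.le (one_le_pow₀ hC)
      _ ≤ Nrm 0 (latInc v) := hlattice 0 le_rfl v hv0
  obtain ⟨a, ha, b, hb, rfl⟩ := Submodule.mem_sup.1 hv
  have hsplit := htrans _ _ _ (hLp a ha) (hLm b hb) (latInc_add a b)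
  by_cases ha0 : a = 0
  · subst ha0
    have hb0 : b ≠ 0 := by simpa using hv0
    refine le_of_decay_of_transversal hε0 (by linarith) hlam hδ hδ1
      ((hlattice _ (by rw [abs_le]; omega) b hb0).trans (hdecayM _ (hLm b hb))) ?_
    simpa using hsplit.2
  · exact le_of_decay_of_transversal hε0 (by linarith) hlam hδ hδ1
      ((hlattice _ (by rw [abs_le]; omega) a ha0).trans (hdecayP _ (hLp a ha))) hsplit.1

/-- Abstract version of the torsion homology lower bound: given slice norms `‖·‖_n`
(`|n| ≤ N`) satisfying (a) a uniform lower bound `ε₀` on nonzero integral classes,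
uniform comparability, (b) uniform transversality of the decomposition `V = V⁺ ⊕ V⁻` with
constant `C·λ₀^{-1/2}`, and (c) exponential decay of classes of `V⁺` (resp. `V⁻`) toward the
right (resp. left) end, every nonzero `v ∈ Λ⁺ + Λ⁻` satisfies `‖v‖₀ ≥ c·λ₀·(1+δ)^N`, and
`#(Λ/(Λ⁺+Λ⁻)) ≥ c'·λ₀^{2g}·(1+δ)^{2gN}`, with `c, c'` depending only on `g, C, ε₀, D`. -/
theorem abstract_torsion_lower_bound
    (g : ℕ) (hg : 0 < g) (C D ε0 : ℝ) (hC : 1 ≤ C) (hD : 1 ≤ D) (hε0 : 0 < ε0) :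
    ∃ c c' : ℝ, 0 < c ∧ 0 < c' ∧
      ∀ (N : ℕ) (lam0 δ : ℝ), 0 < lam0 → lam0 ≤ 1 → 0 < δ → δ < 1 →
      ∀ (Lp Lm : Submodule ℤ (Fin (2 * g) → ℤ))
        (Vp Vm : Submodule ℝ (Fin (2 * g) → ℝ)),
        IsCompl Vp Vm →
        (∀ v ∈ Lp, latInc v ∈ Vp) →
        (∀ v ∈ Lm, latInc v ∈ Vm) →
        ∀ Nrm : ℤ → (Fin (2 * g) → ℝ) → ℝ,
          -- (a) uniform lower bound for nonzero integral classes in every slice norm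
          (∀ n : ℤ, |n| ≤ (N : ℤ) → ∀ v : Fin (2 * g) → ℤ, v ≠ 0 → ε0 ≤ Nrm n (latInc v)) →
          -- the slice norms are pairwise comparable with uniform constant `D`,
          -- and `‖·‖₀` is comparable with the Euclidean norm
          (∀ m n : ℤ, |m| ≤ (N : ℤ) → |n| ≤ (N : ℤ) → ∀ v, Nrm m v ≤ D * Nrm n v) →
          (∀ v, D⁻¹ * eNorm v ≤ Nrm 0 v ∧ Nrm 0 v ≤ D * eNorm v) →
          -- (b) uniform transversality of `V = V⁺ ⊕ V⁻`
          (∀ (v vp vm : Fin (2 * g) → ℝ), vp ∈ Vp → vm ∈ Vm → v = vp + vm →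
            Nrm 0 vp ≤ C * (Real.sqrt lam0)⁻¹ * Nrm 0 v ∧
            Nrm 0 vm ≤ C * (Real.sqrt lam0)⁻¹ * Nrm 0 v) →
          -- (c) exponential decay of `V⁺` to the right and of `V⁻` to the left
          (∀ vp ∈ Vp,
            Nrm ((N : ℤ) - 1) vp ≤ C * (Real.sqrt lam0)⁻¹ * (1 - δ) ^ N * Nrm 0 vp) →
          (∀ vm ∈ Vm,
            Nrm (-(N : ℤ) + 1) vm ≤ C * (Real.sqrt lam0)⁻¹ * (1 - δ) ^ N * Nrm 0 vm) →
          (∀ v ∈ Lp ⊔ Lm, v ≠ 0 → c * lam0 * (1 + δ) ^ N ≤ Nrm 0 (latInc v)) ∧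
          (⌈c' * lam0 ^ (2 * g) * (1 + δ) ^ (2 * g * N)⌉₊ : Cardinal) ≤
            Cardinal.mk ((Fin (2 * g) → ℤ) ⧸ (Lp ⊔ Lm)) := by
  have hn : 0 < 2 * g := by omega
  have hs : 0 < √((2 * g : ℕ) : ℝ) := Real.sqrt_pos.2 (by exact_mod_cast hn)
  have hC0 : 0 < C := by linarith
  have hD0 : 0 < D := by linarith
  refine ⟨ε0 / C ^ 2, (ε0 / C ^ 2 / (2 * D * √((2 * g : ℕ) : ℝ))) ^ (2 * g), by positivity,
    by positivity, ?_⟩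
  intro N lam0 δ hlam hlam1 hδ hδ1 Lp Lm Vp Vm _ hLp hLm Nrm hlattice _ hNrm0 htrans hdecayP
    hdecayM
  have hlower : ∀ v ∈ Lp ⊔ Lm, v ≠ 0 → ε0 / C ^ 2 * lam0 * (1 + δ) ^ N ≤ Nrm 0 (latInc v) :=
    fun v hv hv0 => le_nrm_zero_of_mem_sup hε0 hC hlam hlam1 hδ.le hδ1.le hLp hLm hlattice
      htrans hdecayP hdecayM hv hv0
  refine ⟨hlower, ?_⟩
  set R := ε0 / C ^ 2 * lam0 * (1 + δ) ^ N / D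
  have hR : 0 < R := by positivity
  have hbox := pow_le_mk_quotient_of_le_eNorm (Lp ⊔ Lm) (sqrt_mul_floor_div_lt hn hR)
    fun v hv hv0 => (div_le_iff₀' hD0).2 <| (hlower v hv hv0).trans (hNrm0 _).2
  refine le_trans (Nat.cast_le.2 ?_) hbox
  convert ceil_pow_le_floor_add_one_pow (by positivity : 0 ≤ R / (2 * √((2 * g : ℕ) : ℝ))) (2 * g)
    using 2
  rw [pow_mul' (1 + δ), ← mul_pow, ← mul_pow]
  congr 1
  simp only [R]
  ring
end

section
/- Let T : W → W be linear on a finite-dimensional real vector space splitting as a direct sum of T-eigenspaces with eigenvalues of absolute value ≠ 1, let W^cont and W^exp be the contracting and expanding subspaces, and let W⁺, W⁻ ⊆ W have dim W⁺ + dim W⁻ = dim W with W⁺ ∩ W^cont = 0 and W⁻ ∩ W^exp = 0. Then dim W⁺ = dim W^exp and dim W⁻ = dim W^cont, and as k → +∞ the subspaces T^k W⁺ converge to W^exp and T^{-k} W⁻ converge to W^cont (in the Grassmannian of W). -/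
/-!
Transversality and the dimension count make `W⁺` a complement of `W^cont`, hence the graph
`{e + χ e | e ∈ W^exp}` of a linear map `χ : W^exp → W^cont`. Then `T^k W⁺` is the graph of
`T^k ∘ χ ∘ T^{-k}` over `W^exp`, which tends to `0`: in finite dimension the pointwise decay of
`T^k` on `W^cont` is uniform, and `T^{-k}` eventually does not expand `W^exp`.
For `W⁻` exchange `T` and `T⁻¹`.
-/

open Filter Topology Module Set

theorem LinearEquiv.pow_apply_symm_pow_apply {R M : Type*} [Semiring R] [AddCommMonoid M]
    [Module R M] (T : M ≃ₗ[R] M) (k : ℕ) (x : M) :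
    ((T : End R M) ^ k) (((T.symm : End R M) ^ k) x) = x := by
  simp only [End.pow_apply, LinearEquiv.coe_coe]
  exact Function.LeftInverse.iterate T.apply_symm_apply k x

theorem LinearEquiv.symm_pow_apply_pow_apply {R M : Type*} [Semiring R] [AddCommMonoid M]
    [Module R M] (T : M ≃ₗ[R] M) (k : ℕ) (x : M) :
    ((T.symm : End R M) ^ k) (((T : End R M) ^ k) x) = x :=
  T.symm.pow_apply_symm_pow_apply k x

theorem Submodule.exists_graph_of_isCompl {R M : Type*} [Ring R] [AddCommGroup M] [Module R M]
    {C E P : Submodule R M} (hCE : IsCompl C E) (hPC : IsCompl P C) :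
    ∃ χ : M →ₗ[R] M, (∀ x, χ x ∈ C) ∧ (∀ v ∈ P, ∃ e ∈ E, v = e + χ e) ∧
      ∀ e ∈ E, e + χ e ∈ P := by
  -- `χ := -(projection onto C along P)`, so that `e + χ e` is the projection of `e` onto `P`
  have hgraph : ∀ x, x + -C.projection P hPC.symm x = P.projection C hPC x := fun x => by
    rw [← sub_eq_add_neg, sub_eq_iff_eq_add, projection_add_projection_eq_self]
  refine ⟨-C.projection P hPC.symm, fun x => by simp, fun v hv => ?_, fun e _ => ?_⟩
  · refine ⟨E.projection C hCE.symm v, projection_apply_mem _ _, ?_⟩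
    have hv' : E.projection C hCE.symm v = v - C.projection E hCE v := by
      rw [eq_sub_iff_add_eq, add_comm, projection_add_projection_eq_self]
    rw [LinearMap.neg_apply, hgraph, hv', map_sub, projection_apply_of_mem_left hPC hv,
      projection_apply_of_mem_right hPC (projection_apply_mem _ _), sub_zero]
  · rw [LinearMap.neg_apply, hgraph]; exact projection_apply_mem _ _

theorem Submodule.finrank_eq_and_isCompl_of_disjoint {K V : Type*} [DivisionRing K]
    [AddCommGroup V] [Module K V] [FiniteDimensional K V] {C E P Q : Submodule K V}
    (hCE : C ⊔ E = ⊤) (hP : Disjoint P C) (hQ : Disjoint Q E)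
    (hdim : finrank K P + finrank K Q = finrank K V) :
    finrank K P = finrank K E ∧ finrank K Q = finrank K C ∧ IsCompl C E := by
  have hPC := Submodule.finrank_add_finrank_le_of_disjoint hP
  have hQE := Submodule.finrank_add_finrank_le_of_disjoint hQ
  have hCE' := Submodule.finrank_sup_add_finrank_inf_eq C E
  rw [hCE, finrank_top] at hCE'
  refine ⟨by omega, by omega, ⟨?_, codisjoint_iff.mpr hCE⟩⟩
  rw [disjoint_iff, ← Submodule.finrank_eq_zero]
  omega

section Pointwise

variable {𝕜 U F : Type*} [NontriviallyNormedField 𝕜] [CompleteSpace 𝕜]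
  [NormedAddCommGroup U] [NormedSpace 𝕜 U] [FiniteDimensional 𝕜 U]
  [NormedAddCommGroup F] [NormedSpace 𝕜 F] [FiniteDimensional 𝕜 F]

theorem LinearMap.tendsto_toContinuousLinearMap_of_tendsto_apply {ι : Type*} {l : Filter ι}
    {f : ι → U →ₗ[𝕜] F} {g : U →ₗ[𝕜] F} (h : ∀ x, Tendsto (fun i => f i x) l (𝓝 (g x))) :
    Tendsto (fun i => toContinuousLinearMap (f i)) l (𝓝 (toContinuousLinearMap g)) := by
  let b := finBasis 𝕜 U
  let Ψ : (Fin (finrank 𝕜 U) → F) ≃L[𝕜] (U →L[𝕜] F) :=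
    ((b.constr 𝕜).trans toContinuousLinearMap).toContinuousLinearEquiv
  have hΨ : ∀ f : U →ₗ[𝕜] F, toContinuousLinearMap f = Ψ fun j => f (b j) := fun f => by
    simp [Ψ, b.constr_self]
  simp only [hΨ]
  exact (Ψ.continuous.tendsto _).comp (tendsto_pi_nhds.mpr fun j => h (b j))

theorem LinearMap.eventually_norm_apply_le_of_tendsto_zero {f : ℕ → U →ₗ[𝕜] F}
    (h : ∀ x, Tendsto (fun k => f k x) atTop (𝓝 0)) {ε : ℝ} (hε : 0 < ε) :
    ∀ᶠ k in atTop, ∀ x, ‖f k x‖ ≤ ε * ‖x‖ := by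
  have hlim := tendsto_toContinuousLinearMap_of_tendsto_apply (g := 0) (by simpa using h)
  rw [map_zero] at hlim
  filter_upwards [(tendsto_zero_iff_norm_tendsto_zero.mp hlim).eventually (ge_mem_nhds hε)]
    with k hk x
  exact (toContinuousLinearMap (f k)).le_of_opNorm_le hk x

end Pointwise

namespace Module.End

variable {V : Type*} [NormedAddCommGroup V] [NormedSpace ℝ V]

/-- `W^cont`; `expandingSubspace` is `W^exp`. -/
def contractingSubspace (f : End ℝ V) : Submodule ℝ V :=
  ⨆ μ ∈ {μ : ℝ | |μ| < 1}, f.eigenspace μ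

def expandingSubspace (f : End ℝ V) : Submodule ℝ V :=
  ⨆ μ ∈ {μ : ℝ | 1 < |μ|}, f.eigenspace μ

theorem contractingSubspace_sup_expandingSubspace (f : End ℝ V)
    (h : ⨆ μ ∈ {μ : ℝ | |μ| ≠ 1}, f.eigenspace μ = ⊤) :
    f.contractingSubspace ⊔ f.expandingSubspace = ⊤ := by
  have hsplit : {μ : ℝ | |μ| ≠ 1} = {μ | |μ| < 1} ∪ {μ | 1 < |μ|} :=
    Set.ext fun _ => ne_iff_lt_or_gt
  rwa [hsplit, iSup_union] at h

theorem mapsTo_iSup_eigenspace_of_commute {R M : Type*} [CommRing R] [AddCommGroup M]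
    [Module R M] {f g : End R M} (h : Commute f g) (s : Set R) :
    MapsTo g ((⨆ μ ∈ s, f.eigenspace μ : Submodule R M) : Set M)
      ((⨆ μ ∈ s, f.eigenspace μ : Submodule R M) : Set M) := by
  have hmap : (⨆ μ ∈ s, f.eigenspace μ).map g ≤ ⨆ μ ∈ s, f.eigenspace μ := by
    simp only [Submodule.map_iSup]
    exact iSup₂_mono fun μ _ =>
      Submodule.map_le_iff_le_comap.mpr (mapsTo_genEigenspace_of_comm h μ 1)
  exact fun x hx => hmap (Submodule.mem_map_of_mem hx)

theorem eigenspace_symm {R M : Type*} [Field R] [AddCommGroup M] [Module R M]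
    (T : M ≃ₗ[R] M) (μ : R) :
    eigenspace (T.symm : End R M) μ = eigenspace (T : End R M) μ⁻¹ := by
  rcases eq_or_ne μ 0 with rfl | hμ
  · simp [eigenspace_zero]
  ext x
  simp only [mem_eigenspace_iff, LinearEquiv.coe_coe]
  rw [LinearEquiv.symm_apply_eq, map_smul, eq_inv_smul_iff₀ hμ, eq_comm]

theorem contractingSubspace_symm (T : V ≃ₗ[ℝ] V) :
    contractingSubspace (T.symm : End ℝ V) = expandingSubspace (T : End ℝ V) := by
  simp only [contractingSubspace, expandingSubspace, eigenspace_symm]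
  apply le_antisymm
  · refine iSup₂_le fun μ (hμ : |μ| < 1) => ?_
    rcases eq_or_ne μ 0 with rfl | hμ0
    · simp [eigenspace_zero]
    · refine le_iSup₂_of_le μ⁻¹ ?_ le_rfl
      simpa [abs_inv] using (one_lt_inv₀ (abs_pos.mpr hμ0)).mpr hμ
  · refine iSup₂_le fun μ (hμ : 1 < |μ|) => le_iSup₂_of_le μ⁻¹ ?_ (by rw [inv_inv])
    simpa [abs_inv] using inv_lt_one_of_one_lt₀ hμ

theorem tendsto_pow_apply_of_mem_contractingSubspace (S : End ℝ V) {x : V}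
    (hx : x ∈ S.contractingSubspace) : Tendsto (fun k => (S ^ k) x) atTop (𝓝 0) := by
  let Z : Submodule ℝ V :=
    { carrier := {x | Tendsto (fun k => (S ^ k) x) atTop (𝓝 0)}
      add_mem' := fun ha hb => by simpa using ha.add hb
      zero_mem' := by simp
      smul_mem' := fun c x hx => by simpa using hx.const_smul c }
  have hle : S.contractingSubspace ≤ Z := by
    refine iSup₂_le fun μ (hμ : |μ| < 1) y hy => ?_
    have hpow : ∀ k, (S ^ k) y = μ ^ k • y := fun k => by
      rcases eq_or_ne y 0 with rfl | hy0
      · simp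
      · exact HasEigenvector.pow_apply ⟨hy, hy0⟩ k
    simpa [Z, hpow] using (tendsto_pow_atTop_nhds_zero_of_abs_lt_one hμ).smul_const y
  exact hle hx

theorem eventually_norm_pow_apply_le [FiniteDimensional ℝ V] (S : End ℝ V) {ε : ℝ}
    (hε : 0 < ε) : ∀ᶠ k in atTop, ∀ x ∈ S.contractingSubspace, ‖(S ^ k) x‖ ≤ ε * ‖x‖ := by
  refine (LinearMap.eventually_norm_apply_le_of_tendsto_zero
    (f := fun k => (S ^ k) ∘ₗ S.contractingSubspace.subtype)
    (fun x => S.tendsto_pow_apply_of_mem_contractingSubspace x.2) hε).mono fun k hk x hx => ?_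
  exact hk ⟨x, hx⟩

end Module.End

section Grassmann

variable {V : Type*} [SeminormedAddCommGroup V] [Module ℝ V]

/-- Convergence `U k → L` in the Grassmannian, measured by relative distances of vectors. -/
def SubspacesTendsto (U : ℕ → Submodule ℝ V) (L : Submodule ℝ V) : Prop :=
  ∀ ε : ℝ, 0 < ε → ∃ K : ℕ, ∀ k : ℕ, K ≤ k →
    (∀ v ∈ U k, ∃ w ∈ L, ‖v - w‖ ≤ ε * ‖v‖) ∧ (∀ w ∈ L, ∃ v ∈ U k, ‖v - w‖ ≤ ε * ‖w‖)

theorem forall_exists_norm_sub_le_of_graph {E U : Submodule ℝ V} {δ : V → V} {c ε : ℝ}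
    (hc₀ : 0 ≤ c) (hc : c ≤ 1 / 2) (hcε : 2 * c ≤ ε) (hδ : ∀ w ∈ E, ‖δ w‖ ≤ c * ‖w‖)
    (hU : ∀ v ∈ U, ∃ w ∈ E, v = w + δ w) (hE : ∀ w ∈ E, w + δ w ∈ U) :
    (∀ v ∈ U, ∃ w ∈ E, ‖v - w‖ ≤ ε * ‖v‖) ∧ (∀ w ∈ E, ∃ v ∈ U, ‖v - w‖ ≤ ε * ‖w‖) := by
  refine ⟨fun v hv => ?_, fun w hw => ⟨w + δ w, hE w hw, ?_⟩⟩
  · obtain ⟨w, hw, rfl⟩ := hU v hv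
    refine ⟨w, hw, ?_⟩
    have hw_le : ‖w‖ ≤ ‖w + δ w‖ + ‖δ w‖ := by
      simpa using norm_sub_le (w + δ w) (δ w)
    rw [add_sub_cancel_left]
    nlinarith [hδ w hw, norm_nonneg (δ w), norm_nonneg (w + δ w)]
  · rw [add_sub_cancel_left]
    nlinarith [hδ w hw, norm_nonneg w]

theorem subspacesTendsto_of_graph {E : Submodule ℝ V} {U : ℕ → Submodule ℝ V}
    {δ : ℕ → V → V} (hδ : ∀ c > 0, ∀ᶠ k in atTop, ∀ w ∈ E, ‖δ k w‖ ≤ c * ‖w‖)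
    (hU : ∀ k, ∀ v ∈ U k, ∃ w ∈ E, v = w + δ k w) (hE : ∀ k, ∀ w ∈ E, w + δ k w ∈ U k) :
    SubspacesTendsto U E := by
  intro ε hε
  obtain ⟨K, hK⟩ := eventually_atTop.mp (hδ (min (ε / 2) (1 / 2)) (by positivity))
  refine ⟨K, fun k hk => forall_exists_norm_sub_le_of_graph (by positivity) (min_le_right _ _)
    ?_ (hK k hk) (hU k) (hE k)⟩
  linarith [min_le_left (ε / 2) (1 / 2)]

end Grassmann

section Dynamics

variable {V : Type*} [NormedAddCommGroup V] [NormedSpace ℝ V] [FiniteDimensional ℝ V]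

theorem subspacesTendsto_map_pow (T : V ≃ₗ[ℝ] V) {C E P : Submodule ℝ V} (hCE : IsCompl C E)
    (hTE : MapsTo T E E) (hTE' : MapsTo T.symm E E)
    (hC : ∀ ε > 0, ∀ᶠ k in atTop, ∀ x ∈ C, ‖((T : End ℝ V) ^ k) x‖ ≤ ε * ‖x‖)
    (hE : ∀ᶠ k in atTop, ∀ x ∈ E, ‖((T.symm : End ℝ V) ^ k) x‖ ≤ ‖x‖)
    (hPC : Disjoint P C) (hdim : finrank ℝ P = finrank ℝ E) :
    SubspacesTendsto (fun k => P.map ((T : End ℝ V) ^ k)) E := by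
  have hPC' : IsCompl P C := (Submodule.isCompl_iff_disjoint P C
    (by rw [hdim, add_comm, Submodule.finrank_add_eq_of_isCompl hCE])).mpr hPC
  obtain ⟨χ, hχC, hP, hEP⟩ := Submodule.exists_graph_of_isCompl hCE hPC'
  have hpow : ∀ k, MapsTo ⇑((T : End ℝ V) ^ k) E E := fun k => by
    simpa [End.coe_pow] using hTE.iterate k
  have hpow' : ∀ k, MapsTo ⇑((T.symm : End ℝ V) ^ k) E E := fun k => by
    simpa [End.coe_pow] using hTE'.iterate k
  -- the conjugates `T^k ∘ χ ∘ T^{-k}` describe `T^k P` as graphs over `E`, and they tend to `0`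
  refine subspacesTendsto_of_graph
    (δ := fun k w => ((T : End ℝ V) ^ k) (χ (((T.symm : End ℝ V) ^ k) w))) ?_ ?_ ?_
  · intro c hc
    set G := ‖LinearMap.toContinuousLinearMap χ‖
    filter_upwards [hC (c / (G + 1)) (by positivity), hE] with k hCk hEk w hw
    calc ‖((T : End ℝ V) ^ k) (χ (((T.symm : End ℝ V) ^ k) w))‖
        ≤ c / (G + 1) * ‖χ (((T.symm : End ℝ V) ^ k) w)‖ := hCk _ (hχC _)
      _ ≤ c / (G + 1) * (G * ‖((T.symm : End ℝ V) ^ k) w‖) := by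
          gcongr; exact (LinearMap.toContinuousLinearMap χ).le_opNorm _
      _ ≤ c / (G + 1) * (G * ‖w‖) := by gcongr; exact hEk w hw
      _ ≤ c * ‖w‖ := by
          rw [← mul_assoc]
          gcongr
          rw [div_mul_eq_mul_div, div_le_iff₀ (by positivity)]
          nlinarith
  · rintro k _ ⟨u, hu, rfl⟩
    obtain ⟨e, he, rfl⟩ := hP u hu
    exact ⟨_, hpow k he, by simp [T.symm_pow_apply_pow_apply]⟩
  · intro k w hw
    exact ⟨_, hEP _ (hpow' k hw), by simp [T.pow_apply_symm_pow_apply]⟩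

theorem subspacesTendsto_map_pow_contractingSubspace (T : V ≃ₗ[ℝ] V)
    (hCE : IsCompl (End.contractingSubspace (T : End ℝ V))
      (End.contractingSubspace (T.symm : End ℝ V)))
    {P : Submodule ℝ V} (hPC : Disjoint P (End.contractingSubspace (T : End ℝ V)))
    (hdim : finrank ℝ P = finrank ℝ (End.contractingSubspace (T.symm : End ℝ V))) :
    SubspacesTendsto (fun k => P.map ((T : End ℝ V) ^ k))
      (End.contractingSubspace (T.symm : End ℝ V)) := by
  have hcomm : Commute (T : End ℝ V) (T.symm : End ℝ V) := by ext; simp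
  refine subspacesTendsto_map_pow T hCE (End.mapsTo_iSup_eigenspace_of_commute hcomm.symm _)
    (End.mapsTo_iSup_eigenspace_of_commute (Commute.refl _) _)
    (fun ε hε => End.eventually_norm_pow_apply_le _ hε) ?_ hPC hdim
  filter_upwards [End.eventually_norm_pow_apply_le (T.symm : End ℝ V) one_pos] with k hk x hx
  simpa using hk x hx

end Dynamics

/-- First step of Lemma "unif_transverse": with `W` a direct sum of `T`-eigenspaces with
eigenvalues of absolute value `≠ 1`, `W^cont` and `W^exp` the contracting and expanding
subspaces, and `W⁺, W⁻` subspaces of complementary dimensions with `W⁺ ∩ W^cont = 0` and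
`W⁻ ∩ W^exp = 0`, one has `dim W⁺ = dim W^exp`, `dim W⁻ = dim W^cont`, and `T^k W⁺ → W^exp`,
`T^{-k} W⁻ → W^cont` in the Grassmannian as `k → ∞`. -/
theorem subspaces_converge_to_expanding_contracting
    (W : Type*) [NormedAddCommGroup W] [InnerProductSpace ℝ W] [FiniteDimensional ℝ W]
    (T : W ≃ₗ[ℝ] W)
    (hdiag : (⨆ μ ∈ {μ : ℝ | |μ| ≠ 1},
        Module.End.eigenspace (T : W →ₗ[ℝ] W) μ) = ⊤)
    (Wp Wm : Submodule ℝ W)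
    (hdim : Module.finrank ℝ Wp + Module.finrank ℝ Wm = Module.finrank ℝ W)
    (hWp : Wp ⊓ (⨆ μ ∈ {μ : ℝ | |μ| < 1},
        Module.End.eigenspace (T : W →ₗ[ℝ] W) μ) = ⊥)
    (hWm : Wm ⊓ (⨆ μ ∈ {μ : ℝ | 1 < |μ|},
        Module.End.eigenspace (T : W →ₗ[ℝ] W) μ) = ⊥) :
    Module.finrank ℝ Wp =
        Module.finrank ℝ (⨆ μ ∈ {μ : ℝ | 1 < |μ|},
          Module.End.eigenspace (T : W →ₗ[ℝ] W) μ : Submodule ℝ W) ∧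
    Module.finrank ℝ Wm =
        Module.finrank ℝ (⨆ μ ∈ {μ : ℝ | |μ| < 1},
          Module.End.eigenspace (T : W →ₗ[ℝ] W) μ : Submodule ℝ W) ∧
    -- `T^k W⁺ → W^exp` in the Grassmannian
    (∀ ε : ℝ, 0 < ε → ∃ K : ℕ, ∀ k : ℕ, K ≤ k →
      (∀ v ∈ Submodule.map ((T : W →ₗ[ℝ] W) ^ k) Wp,
        ∃ w ∈ (⨆ μ ∈ {μ : ℝ | 1 < |μ|},
          Module.End.eigenspace (T : W →ₗ[ℝ] W) μ : Submodule ℝ W), ‖v - w‖ ≤ ε * ‖v‖) ∧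
      (∀ w ∈ (⨆ μ ∈ {μ : ℝ | 1 < |μ|},
          Module.End.eigenspace (T : W →ₗ[ℝ] W) μ : Submodule ℝ W),
        ∃ v ∈ Submodule.map ((T : W →ₗ[ℝ] W) ^ k) Wp, ‖v - w‖ ≤ ε * ‖w‖)) ∧
    -- `T^{-k} W⁻ → W^cont` in the Grassmannian
    (∀ ε : ℝ, 0 < ε → ∃ K : ℕ, ∀ k : ℕ, K ≤ k →
      (∀ v ∈ Submodule.map ((T.symm : W →ₗ[ℝ] W) ^ k) Wm,
        ∃ w ∈ (⨆ μ ∈ {μ : ℝ | |μ| < 1},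
          Module.End.eigenspace (T : W →ₗ[ℝ] W) μ : Submodule ℝ W), ‖v - w‖ ≤ ε * ‖v‖) ∧
      (∀ w ∈ (⨆ μ ∈ {μ : ℝ | |μ| < 1},
          Module.End.eigenspace (T : W →ₗ[ℝ] W) μ : Submodule ℝ W),
        ∃ v ∈ Submodule.map ((T.symm : W →ₗ[ℝ] W) ^ k) Wm, ‖v - w‖ ≤ ε * ‖w‖)) := by
  have hsup := End.contractingSubspace_sup_expandingSubspace (T : End ℝ W) hdiag
  obtain ⟨hdimp, hdimm, hCE⟩ := Submodule.finrank_eq_and_isCompl_of_disjoint hsup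
    (disjoint_iff.mpr hWp) (disjoint_iff.mpr hWm) hdim
  have hexp := End.contractingSubspace_symm T
  rw [← hexp] at hCE hdimp
  have hp := subspacesTendsto_map_pow_contractingSubspace T hCE (disjoint_iff.mpr hWp) hdimp
  have hm := subspacesTendsto_map_pow_contractingSubspace T.symm hCE.symm
    (by rw [hexp]; exact disjoint_iff.mpr hWm) hdimm
  rw [hexp] at hp hdimp
  exact ⟨hdimp, hdimm, hp, hm⟩
end
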